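/- arXiv:1704.05254 — 2 statements merged into one kernel-verified Lean document; each statement's English description precedes it below -/
import Mathlib

section
/- Let G be a tree-generating SL-HR grammar. Then for every nonterminal A of G, the line-structure ls(A) = ls(rhs(A)) is a rooted forest: it is an acyclic directed graph in which every node has in-degree at most one. -/
open scoped Classical

/-- A hypergraph over a label type `L`: nodes and edges are natural-number
identifiers, `att` gives the attachment sequence of an edge, `lab` its label,
and `ext` is the sequence of external nodes. -/
structure HGraph (L : Type) where
  V : Finset ℕ
  E : Finset ℕ
  att : ℕ → List ℕ
  lab : ℕ → L
  ext : List ℕ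

namespace HGraph

variable {L : Type}

/-- Well-formedness of a hypergraph over a ranked alphabet `rk`:
nodes nonempty, attachments are nonempty repetition-free sequences of nodes
whose length is the rank of the label, and the external nodes form a
repetition-free sequence of nodes. -/
def WF (rk : L → ℕ) (g : HGraph L) : Prop :=
  g.V.Nonempty ∧
    (∀ e ∈ g.E, (∀ v ∈ g.att e, v ∈ g.V) ∧ (g.att e).Nodup ∧
      (g.att e).length = rk (g.lab e) ∧ g.att e ≠ []) ∧
    (∀ v ∈ g.ext, v ∈ g.V) ∧ g.ext.Nodup

/-- The edge size `|g|_E`: simple edges (rank ≤ 2) count 1, a hyperedge of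
rank `n > 2` counts `n`. -/
def esize (g : HGraph L) : ℕ :=
  ∑ e ∈ g.E, (if (g.att e).length ≤ 2 then 1 else (g.att e).length)

/-- The size `|g| = |g|_V + |g|_E`. -/
def size (g : HGraph L) : ℕ := g.V.card + g.esize

/-- Isomorphism of hypergraphs: bijections on nodes and edges preserving
attachment, labels and external nodes. -/
def Isomorphic (g h : HGraph L) : Prop :=
  ∃ f fe : ℕ → ℕ,
    Set.BijOn f ↑g.V ↑h.V ∧ Set.BijOn fe ↑g.E ↑h.E ∧
    (∀ e ∈ g.E, h.att (fe e) = (g.att e).map f) ∧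
    (∀ e ∈ g.E, h.lab (fe e) = g.lab e) ∧
    h.ext = g.ext.map f

end HGraph

/-- `IsReplacement g e₀ h g'` holds if `g'` is (a realization of) the
replacement `g[e₀/h]`: the edge `e₀` is removed from `g`, a disjoint copy of
`h` (renamed via `ρ` on nodes and `η` on edges) is adjoined, and the i-th
external node of `h` is identified with the i-th attachment node of `e₀`. -/
def IsReplacement {L : Type} (g : HGraph L) (e₀ : ℕ) (h : HGraph L)
    (g' : HGraph L) : Prop :=
  ∃ ρ η : ℕ → ℕ,
    Set.InjOn ρ ↑h.V ∧ Set.InjOn η ↑h.E ∧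
    (∀ v ∈ h.V, v ∉ h.ext → ρ v ∉ g.V) ∧
    h.ext.map ρ = g.att e₀ ∧
    (∀ e ∈ h.E, η e ∉ g.E) ∧
    g'.V = g.V ∪ h.V.image ρ ∧
    g'.E = g.E.erase e₀ ∪ h.E.image η ∧
    (∀ e ∈ g.E.erase e₀, g'.att e = g.att e ∧ g'.lab e = g.lab e) ∧
    (∀ e ∈ h.E, g'.att (η e) = (h.att e).map ρ ∧ g'.lab (η e) = h.lab e) ∧
    g'.ext = g.ext

/-- An HR grammar over a terminal alphabet `T`: nonterminals are natural
numbers (`NT`), `rkN` gives their ranks, `rhs` the unique right-hand side of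
each nonterminal, and `S` is the start graph.  Labels of graphs occurring in
the grammar are `T ⊕ ℕ` (terminals on the left, nonterminals on the right). -/
structure HRGrammar (T : Type) where
  NT : Finset ℕ
  rkN : ℕ → ℕ
  rhs : ℕ → HGraph (T ⊕ ℕ)
  S : HGraph (T ⊕ ℕ)

namespace HRGrammar

variable {T : Type}

/-- The rank function on labels `T ⊕ ℕ` induced by terminal ranks `rkT`. -/
def rk (G : HRGrammar T) (rkT : T → ℕ) : T ⊕ ℕ → ℕ := Sum.elim rkT G.rkN

/-- Well-formedness of an HR grammar over ranked alphabet `rkT`: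
all ranks are ≥ 1, the start graph and all right-hand sides are well-formed,
`rank(A) = rank(rhs A)` for all nonterminals, and all nonterminal labels
occurring in the grammar are declared nonterminals. -/
def WF (G : HRGrammar T) (rkT : T → ℕ) : Prop :=
  (∀ a : T, 1 ≤ rkT a) ∧ (∀ A ∈ G.NT, 1 ≤ G.rkN A) ∧
    G.S.WF (G.rk rkT) ∧
    (∀ A ∈ G.NT, (G.rhs A).WF (G.rk rkT) ∧ (G.rhs A).ext.length = G.rkN A) ∧
    (∀ e ∈ G.S.E, ∀ B : ℕ, G.S.lab e = Sum.inr B → B ∈ G.NT) ∧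
    (∀ A ∈ G.NT, ∀ e ∈ (G.rhs A).E, ∀ B : ℕ, (G.rhs A).lab e = Sum.inr B → B ∈ G.NT)

/-- The dependency relation: `dep G A B` iff a `B`-labeled edge occurs in
`rhs(A)`. -/
def dep (G : HRGrammar T) (A B : ℕ) : Prop :=
  A ∈ G.NT ∧ B ∈ G.NT ∧ ∃ e ∈ (G.rhs A).E, (G.rhs A).lab e = Sum.inr B

/-- Straight-line condition: the dependency relation is acyclic, and every
nonterminal occurs in some derivation from the start graph (i.e., it is
reachable, via dependencies, from a nonterminal occurring in `S`).  (Every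
nonterminal has exactly one rule by construction, since `rhs` is a
function.) -/
def SL (G : HRGrammar T) : Prop :=
  (∀ A : ℕ, ¬ Relation.TransGen G.dep A A) ∧
    (∀ A ∈ G.NT, ∃ B : ℕ, (∃ e ∈ G.S.E, G.S.lab e = Sum.inr B) ∧
      Relation.ReflTransGen G.dep B A)

/-- One derivation step: replace some nonterminal edge by its right-hand
side. -/
def Derive (G : HRGrammar T) (g g' : HGraph (T ⊕ ℕ)) : Prop :=
  ∃ e ∈ g.E, ∃ A ∈ G.NT, g.lab e = Sum.inr A ∧ IsReplacement g e (G.rhs A) g'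

/-- A graph is terminal if all its edge labels are terminal symbols. -/
def Terminal (g : HGraph (T ⊕ ℕ)) : Prop :=
  ∀ e ∈ g.E, ∃ a : T, g.lab e = Sum.inl a

/-- The language of the grammar: all terminal graphs derivable from `S`. -/
def Lang (G : HRGrammar T) : Set (HGraph (T ⊕ ℕ)) :=
  { g | Relation.ReflTransGen G.Derive G.S g ∧ Terminal g }

/-- The size `|G| = |S| + Σ_{(A,g) ∈ P} |g|`. -/
def size (G : HRGrammar T) : ℕ :=
  G.S.size + ∑ A ∈ G.NT, (G.rhs A).size

end HRGrammar

/-- A ranked ordered tree given by its finite set `D` of Dewey addresses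
(children of `u` are `u ++ [1], …, u ++ [m]`) together with a labeling of the
addresses. -/
structure RankedTree (L : Type) where
  D : Finset (List ℕ)
  lab : List ℕ → L

namespace RankedTree

variable {L : Type}

/-- Well-formedness of a ranked tree relative to the (hypergraph) rank
function `rk` on labels: a symbol of rank `m + 1` has exactly `m` children
(a tree node labeled `σ` has children `1, …, rk σ - 1`). -/
def WF (rk : L → ℕ) (t : RankedTree L) : Prop :=
  [] ∈ t.D ∧
    (∀ (u : List ℕ) (i : ℕ), u ++ [i] ∈ t.D →
      u ∈ t.D ∧ 1 ≤ i ∧ i ≤ rk (t.lab u) - 1) ∧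
    (∀ u ∈ t.D, ∀ i : ℕ, 1 ≤ i → i ≤ rk (t.lab u) - 1 → u ++ [i] ∈ t.D)

/-- The preorder (lexicographic) position of an address among the addresses
of the tree. -/
noncomputable def pos (t : RankedTree L) (u : List ℕ) : ℕ :=
  (t.D.filter fun v => List.Lex (· < ·) v u).card

end RankedTree

/-- `IsTGraphOf rk t g` holds if `g` is the tree-graph `t-graph(t)`: one node
per tree node (numbered in preorder), one hyperedge per tree node, labeled by
the node's symbol and attached first to the node itself and then to its
children in order, the root being the unique external node. -/
def IsTGraphOf {L : Type} (rk : L → ℕ) (t : RankedTree L) (g : HGraph L) : Prop :=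
  g.V = Finset.range t.D.card ∧ g.E = Finset.range t.D.card ∧
    (∀ u ∈ t.D,
      g.att (t.pos u) =
        t.pos u :: (List.range (rk (t.lab u) - 1)).map (fun j => t.pos (u ++ [j + 1])) ∧
      g.lab (t.pos u) = t.lab u) ∧
    g.ext = [t.pos []]

/-- A hypergraph is a tree-graph if it is (isomorphic to) `t-graph(t)` for
some well-formed ranked tree `t`. -/
def IsTreeGraph {L : Type} (rk : L → ℕ) (g : HGraph L) : Prop :=
  ∃ t : RankedTree L, t.WF rk ∧
    ∃ g₀ : HGraph L, IsTGraphOf rk t g₀ ∧ g.Isomorphic g₀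

namespace HGraph

variable {L : Type}

/-- A path from `s` to `t` in a hypergraph: a nonempty sequence of edges,
each edge directed from its first attachment node to its remaining attachment
nodes, starting at `s` and ending at `t`. -/
def IsPath (g : HGraph L) (p : List ℕ) (s t : ℕ) : Prop :=
  p ≠ [] ∧ (∀ e ∈ p, e ∈ g.E) ∧
    (∃ e, p.head? = some e ∧ (g.att e).head? = some s) ∧
    List.Chain' (fun e e' => ∃ v, (g.att e').head? = some v ∧ v ∈ (g.att e).tail) p ∧
    (∃ e, p.getLast? = some e ∧ t ∈ (g.att e).tail)

/-- `t` is reachable from `s`: either `t = s` or there is a path. -/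
def Reaches (g : HGraph L) (s t : ℕ) : Prop :=
  s = t ∨ ∃ p : List ℕ, g.IsPath p s t

/-- An internal path: all nodes on it (the first attachment nodes of its
second, …, last edge) are internal. -/
def InternalPath (g : HGraph L) (p : List ℕ) (s t : ℕ) : Prop :=
  g.IsPath p s t ∧ ∀ e ∈ p.tail, ∀ v : ℕ, (g.att e).head? = some v → v ∉ g.ext

end HGraph

/-- The line-structure relation `ls(A)` of a nonterminal `A`: on the external
nodes of `rhs(A)`, with an edge from `u` to `v` iff there is an internal path
from `u` to `v` in `val(rhs A)` (i.e., in some terminal graph derived from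
`rhs(A)`). -/
def lsRel {T : Type} (G : HRGrammar T) (A : ℕ) (u v : ℕ) : Prop :=
  u ∈ (G.rhs A).ext ∧ v ∈ (G.rhs A).ext ∧
    ∃ h : HGraph (T ⊕ ℕ),
      Relation.ReflTransGen G.Derive (G.rhs A) h ∧ HRGrammar.Terminal h ∧
        ∃ p : List ℕ, h.InternalPath p u v

/-!
Derivations of an SL-HR grammar terminate, because an edge labelled `B` outweighs everything in
`rhs B` once weights grow exponentially with the height of `B` in the acyclic dependency relation.
They are also confluent up to isomorphism: replacements at distinct edges commute, and replacement
respects isomorphism of the host graph. Hence all terminal graphs derived from `rhs A` are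
isomorphic to one graph `h₀` by isomorphisms fixing the external nodes, and `h₀` witnesses every
edge of `ls(A)`. Since `A` occurs in a derivation from the start graph, `h₀` embeds into a
generated graph, i.e. into a tree-graph. A path of a tree-graph descends from a node to a proper
descendant through every node strictly in between, so an edge `u → v` of `ls(A)` makes `u` a proper
ancestor of `v` with no external node strictly between them. Depth therefore increases along
`ls(A)`, and two predecessors of `v` are comparable ancestors of `v`: the lower one would lie
strictly between the other one and `v` unless they coincide.
-/


namespace Finset

variable {α β : Type*} [DecidableEq β] {f : α → β}

theorem bijOn_of_injOn_of_image_eq {s : Finset α} {t : Finset β} (hf : Set.InjOn f s)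
    (h : s.image f = t) : Set.BijOn f s t := by
  subst h
  rw [coe_image]
  exact hf.bijOn_image

theorem image_eq_of_bijOn {s : Finset α} {t : Finset β} (hf : Set.BijOn f s t) :
    s.image f = t :=
  coe_injective (by rw [coe_image, hf.image_eq])

theorem image_erase_of_injOn [DecidableEq α] {s : Finset α} {a : α} (hf : Set.InjOn f s)
    (ha : a ∈ s) : (s.erase a).image f = (s.image f).erase (f a) := by
  ext z
  simp only [mem_erase, mem_image]
  constructor
  · rintro ⟨x, ⟨hxa, hx⟩, rfl⟩
    exact ⟨fun h => hxa (hf hx ha h), x, hx, rfl⟩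
  · rintro ⟨hne, x, hx, rfl⟩
    exact ⟨x, ⟨fun h => hne (h ▸ rfl), hx⟩, rfl⟩

end Finset

namespace HGraph

variable {L : Type} {rk : L → ℕ}

section WF

variable {g : HGraph L}

theorem WF.att_mem (hg : g.WF rk) {e : ℕ} (he : e ∈ g.E) {v : ℕ} (hv : v ∈ g.att e) :
    v ∈ g.V :=
  (hg.2.1 e he).1 v hv

theorem WF.att_nodup (hg : g.WF rk) {e : ℕ} (he : e ∈ g.E) : (g.att e).Nodup :=
  (hg.2.1 e he).2.1

theorem WF.att_length (hg : g.WF rk) {e : ℕ} (he : e ∈ g.E) :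
    (g.att e).length = rk (g.lab e) :=
  (hg.2.1 e he).2.2.1

theorem WF.ext_mem (hg : g.WF rk) {v : ℕ} (hv : v ∈ g.ext) : v ∈ g.V :=
  hg.2.2.1 v hv

theorem WF.ext_nodup (hg : g.WF rk) : g.ext.Nodup :=
  hg.2.2.2

end WF

/-- `IsReplacement` with the renamings `ρ` of the nodes and `η` of the edges of `h` exposed. -/
structure Replaces (g : HGraph L) (e₀ : ℕ) (h g' : HGraph L) (ρ η : ℕ → ℕ) : Prop where
  injOn_node : Set.InjOn ρ h.V
  injOn_edge : Set.InjOn η h.E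
  node_fresh : ∀ v ∈ h.V, v ∉ h.ext → ρ v ∉ g.V
  ext_map : h.ext.map ρ = g.att e₀
  edge_fresh : ∀ e ∈ h.E, η e ∉ g.E
  V_eq : g'.V = g.V ∪ h.V.image ρ
  E_eq : g'.E = g.E.erase e₀ ∪ h.E.image η
  att_old : ∀ e ∈ g.E.erase e₀, g'.att e = g.att e
  lab_old : ∀ e ∈ g.E.erase e₀, g'.lab e = g.lab e
  att_new : ∀ e ∈ h.E, g'.att (η e) = (h.att e).map ρ
  lab_new : ∀ e ∈ h.E, g'.lab (η e) = h.lab e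
  ext_eq : g'.ext = g.ext

theorem isReplacement_iff {g h g' : HGraph L} {e₀ : ℕ} :
    IsReplacement g e₀ h g' ↔ ∃ ρ η, Replaces g e₀ h g' ρ η := by
  constructor
  · rintro ⟨ρ, η, h1, h2, h3, h4, h5, h6, h7, h8, h9, h10⟩
    exact ⟨ρ, η, h1, h2, h3, h4, h5, h6, h7, fun e he => (h8 e he).1, fun e he => (h8 e he).2,
      fun e he => (h9 e he).1, fun e he => (h9 e he).2, h10⟩
  · rintro ⟨ρ, η, R⟩
    exact ⟨ρ, η, R.injOn_node, R.injOn_edge, R.node_fresh, R.ext_map, R.edge_fresh, R.V_eq,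
      R.E_eq, fun e he => ⟨R.att_old e he, R.lab_old e he⟩,
      fun e he => ⟨R.att_new e he, R.lab_new e he⟩, R.ext_eq⟩

namespace Replaces

variable {g h g' : HGraph L} {e₀ : ℕ} {ρ η : ℕ → ℕ}

theorem mem_att_of_mem_ext (R : Replaces g e₀ h g' ρ η) {v : ℕ} (hv : v ∈ h.ext) :
    ρ v ∈ g.att e₀ :=
  R.ext_map ▸ List.mem_map_of_mem hv

theorem mem_ext_of_mem (R : Replaces g e₀ h g' ρ η) {v : ℕ} (hv : v ∈ h.V) (hg : ρ v ∈ g.V) :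
    v ∈ h.ext := by
  by_contra hne
  exact R.node_fresh v hv hne hg

theorem mem_V_of_mem (R : Replaces g e₀ h g' ρ η) {x : ℕ} (hx : x ∈ g.V) : x ∈ g'.V :=
  R.V_eq ▸ Finset.mem_union_left _ hx

theorem mem_V_of_mem_rhs (R : Replaces g e₀ h g' ρ η) {v : ℕ} (hv : v ∈ h.V) : ρ v ∈ g'.V :=
  R.V_eq ▸ Finset.mem_union_right _ (Finset.mem_image_of_mem ρ hv)

theorem mem_E_of_mem (R : Replaces g e₀ h g' ρ η) {e : ℕ} (he : e ∈ g.E) (hne : e ≠ e₀) :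
    e ∈ g'.E :=
  R.E_eq ▸ Finset.mem_union_left _ (Finset.mem_erase.2 ⟨hne, he⟩)

theorem mem_E_of_mem_rhs (R : Replaces g e₀ h g' ρ η) {e : ℕ} (he : e ∈ h.E) : η e ∈ g'.E :=
  R.E_eq ▸ Finset.mem_union_right _ (Finset.mem_image_of_mem η he)

theorem not_mem_image_edge (R : Replaces g e₀ h g' ρ η) {e : ℕ} (he : e ∈ g.E) :
    e ∉ h.E.image η := by
  simp only [Finset.mem_image, not_exists, not_and]
  rintro y hy rfl
  exact R.edge_fresh y hy he

theorem mem_V_cases (R : Replaces g e₀ h g' ρ η) (hg : g.WF rk) (he₀ : e₀ ∈ g.E) {x : ℕ}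
    (hx : x ∈ g'.V) : x ∈ g.V ∨ ∃ v ∈ h.V, v ∉ h.ext ∧ ρ v = x := by
  rw [R.V_eq, Finset.mem_union, Finset.mem_image] at hx
  rcases hx with hx | ⟨v, hv, rfl⟩
  · exact Or.inl hx
  · by_cases hve : v ∈ h.ext
    · exact Or.inl (hg.att_mem he₀ (R.mem_att_of_mem_ext hve))
    · exact Or.inr ⟨v, hv, hve, rfl⟩

theorem mem_E_cases (R : Replaces g e₀ h g' ρ η) {x : ℕ} (hx : x ∈ g'.E) :
    (x ∈ g.E ∧ x ≠ e₀) ∨ ∃ y ∈ h.E, η y = x := by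
  rw [R.E_eq, Finset.mem_union, Finset.mem_erase, Finset.mem_image] at hx
  exact hx.imp And.symm id

theorem wf (R : Replaces g e₀ h g' ρ η) (hg : g.WF rk) (hh : h.WF rk) : g'.WF rk := by
  refine ⟨hg.1.mono (R.V_eq ▸ Finset.subset_union_left), fun e he => ?_, ?_, ?_⟩
  · rcases R.mem_E_cases he with ⟨he, hne⟩ | ⟨y, hy, rfl⟩
    · have he' : e ∈ g.E.erase e₀ := Finset.mem_erase.2 ⟨hne, he⟩
      obtain ⟨hV, hnd, hlen, hne⟩ := hg.2.1 e he
      rw [R.att_old e he', R.lab_old e he']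
      exact ⟨fun v hv => R.mem_V_of_mem (hV v hv), hnd, hlen, hne⟩
    · obtain ⟨hV, hnd, hlen, hne⟩ := hh.2.1 y hy
      rw [R.att_new y hy, R.lab_new y hy]
      refine ⟨?_, hnd.map_on fun a ha b hb => R.injOn_node (hV a ha) (hV b hb), by simpa, by simpa⟩
      simp only [List.mem_map]
      rintro _ ⟨w, hw, rfl⟩
      exact R.mem_V_of_mem_rhs (hV w hw)
  · rw [R.ext_eq]
    exact fun v hv => R.mem_V_of_mem (hg.ext_mem hv)
  · rw [R.ext_eq]
    exact hg.ext_nodup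

end Replaces

noncomputable def replace (g : HGraph L) (e₀ : ℕ) (h : HGraph L) (ρ η : ℕ → ℕ) : HGraph L where
  V := g.V ∪ h.V.image ρ
  E := g.E.erase e₀ ∪ h.E.image η
  att e := if e ∈ h.E.image η then (h.att (Function.invFunOn η h.E e)).map ρ else g.att e
  lab e := if e ∈ h.E.image η then h.lab (Function.invFunOn η h.E e) else g.lab e
  ext := g.ext

theorem replaces_replace {g h : HGraph L} {e₀ : ℕ} {ρ η : ℕ → ℕ} (hρ : Set.InjOn ρ h.V)
    (hη : Set.InjOn η h.E) (hfresh : ∀ v ∈ h.V, v ∉ h.ext → ρ v ∉ g.V)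
    (hext : h.ext.map ρ = g.att e₀) (hfreshE : ∀ e ∈ h.E, η e ∉ g.E) :
    Replaces g e₀ h (replace g e₀ h ρ η) ρ η := by
  have hold : ∀ e ∈ g.E.erase e₀, e ∉ h.E.image η := by
    simp only [Finset.mem_image, not_exists, not_and]
    rintro e he y hy rfl
    exact hfreshE y hy (Finset.mem_of_mem_erase he)
  have hnew : ∀ e ∈ h.E, η e ∈ h.E.image η ∧ Function.invFunOn η h.E (η e) = e :=
    fun e he => ⟨Finset.mem_image_of_mem η he, hη.leftInvOn_invFunOn he⟩
  refine ⟨hρ, hη, hfresh, hext, hfreshE, rfl, rfl, fun e he => ?_, fun e he => ?_,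
    fun e he => ?_, fun e he => ?_, rfl⟩
  · exact if_neg (hold e he)
  · exact if_neg (hold e he)
  · simp only [replace, (hnew e he).1, (hnew e he).2, if_true]
  · simp only [replace, (hnew e he).1, (hnew e he).2, if_true]

theorem exists_fresh_renaming {g h : HGraph L} {e₀ : ℕ} (hg : g.WF rk) (he₀ : e₀ ∈ g.E)
    (hext : h.ext.Nodup) (hlen : h.ext.length = (g.att e₀).length) (F : Finset ℕ) :
    ∃ ρ η : ℕ → ℕ, Set.InjOn ρ h.V ∧ Set.InjOn η h.E ∧
      (∀ v ∈ h.V, v ∉ h.ext → ρ v ∉ F) ∧ h.ext.map ρ = g.att e₀ ∧ ∀ e ∈ h.E, η e ∉ F := by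
  -- external nodes go to the attachment of `e₀` in order, everything else above all of `g.V ∪ F`
  set N := (g.V ∪ F).sup id + 1
  have hbig : ∀ x, N ≤ x → x ∉ g.V ∪ F := fun x hx hmem => by
    have := Finset.le_sup (f := id) hmem
    simp only [id] at this
    omega
  have hattN : ∀ i (hi : i < (g.att e₀).length), (g.att e₀)[i] < N := fun i hi => by
    by_contra hge
    exact hbig _ (by omega) (Finset.mem_union_left F (hg.att_mem he₀ (List.getElem_mem hi)))
  have hidx : ∀ v ∈ h.ext, h.ext.idxOf v < (g.att e₀).length := fun v hv =>
    hlen ▸ List.idxOf_lt_length_iff.2 hv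
  refine ⟨fun v => if v ∈ h.ext then (g.att e₀).getD (h.ext.idxOf v) 0 else N + v,
    fun e => N + e, fun x _ y _ hxy => ?_, fun x _ y _ hxy => by simpa using hxy,
    fun v _ hv => ?_, ?_, fun e _ hmem => hbig (N + e) (by omega) (Finset.mem_union_right _ hmem)⟩
  · by_cases hx : x ∈ h.ext <;> by_cases hy : y ∈ h.ext <;>
      simp only [hx, hy, if_true, if_false] at hxy
    · rw [List.getD_eq_getElem _ _ (hidx _ hx), List.getD_eq_getElem _ _ (hidx _ hy),
        (hg.att_nodup he₀).getElem_inj_iff] at hxy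
      calc x = h.ext[h.ext.idxOf x]'(List.idxOf_lt_length_iff.2 hx) :=
            (List.getElem_idxOf _).symm
        _ = h.ext[h.ext.idxOf y]'(List.idxOf_lt_length_iff.2 hy) := by simp only [hxy]
        _ = y := List.getElem_idxOf _
    · rw [List.getD_eq_getElem _ _ (hidx _ hx)] at hxy
      have := hattN _ (hidx _ hx)
      omega
    · rw [List.getD_eq_getElem _ _ (hidx _ hy)] at hxy
      have := hattN _ (hidx _ hy)
      omega
    · omega
  · simp only [hv, if_false]
    exact hbig _ (by omega) ∘ Finset.mem_union_right _
  · refine List.ext_getElem (by simp [hlen]) fun i h₁ h₂ => ?_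
    simp only [List.getElem_map, List.getElem_mem, if_true]
    rw [hext.idxOf_getElem i (by simpa using h₁), List.getD_eq_getElem _ _ h₂]

theorem exists_replaces {g h : HGraph L} {e₀ : ℕ} (hg : g.WF rk) (he₀ : e₀ ∈ g.E)
    (hext : h.ext.Nodup) (hlen : h.ext.length = (g.att e₀).length) (F : Finset ℕ) :
    ∃ g' ρ η, Replaces g e₀ h g' ρ η ∧ (∀ v ∈ h.V, v ∉ h.ext → ρ v ∉ F) ∧
      ∀ e ∈ h.E, η e ∉ F := by
  obtain ⟨ρ, η, hρ, hη, hfresh, hmap, hfreshE⟩ :=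
    exists_fresh_renaming hg he₀ hext hlen (g.V ∪ g.E ∪ F)
  refine ⟨_, ρ, η, replaces_replace hρ hη (fun v hv hve hmem => ?_) hmap
    (fun e he hmem => ?_), fun v hv hve hmem => ?_, fun e he hmem => ?_⟩ <;>
  first
    | exact hfresh v hv hve (by simp [hmem])
    | exact hfreshE e he (by simp [hmem])

section Glue

variable {s t : Finset ℕ} {f ρ σ : ℕ → ℕ}

noncomputable def glue (s : Finset ℕ) (f : ℕ → ℕ) (t : Finset ℕ) (ρ σ : ℕ → ℕ) : ℕ → ℕ :=
  fun x => if x ∈ s then f x else σ (Function.invFunOn ρ t x)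

theorem glue_of_mem {x : ℕ} (hx : x ∈ s) : glue s f t ρ σ x = f x :=
  if_pos hx

theorem glue_apply (hρ : Set.InjOn ρ t) {v : ℕ} (hv : v ∈ t) (hcompat : ρ v ∈ s → σ v = f (ρ v)) :
    glue s f t ρ σ (ρ v) = σ v := by
  by_cases hs : ρ v ∈ s
  · rw [glue_of_mem hs, hcompat hs]
  · simp only [glue, hs, if_false, hρ.leftInvOn_invFunOn hv]

theorem injOn_glue (hf : Set.InjOn f s) (hρ : Set.InjOn ρ t) (hσ : Set.InjOn σ t)
    (hdisj : ∀ x ∈ s, ∀ v ∈ t, ρ v ∉ s → f x ≠ σ v) :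
    Set.InjOn (glue s f t ρ σ) ↑(s ∪ t.image ρ) := by
  have hcases : ∀ x ∈ s ∪ t.image ρ, x ∈ s ∨ ∃ v ∈ t, ρ v ∉ s ∧ ρ v = x := by
    intro x hx
    by_cases hxs : x ∈ s
    · exact Or.inl hxs
    · obtain ⟨v, hv, rfl⟩ := Finset.mem_image.1 ((Finset.mem_union.1 hx).resolve_left hxs)
      exact Or.inr ⟨v, hv, hxs, rfl⟩
  intro x hx y hy hxy
  rcases hcases x hx with hx | ⟨v, hv, hvs, rfl⟩ <;> rcases hcases y hy with hy | ⟨w, hw, hws, rfl⟩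
  · rw [glue_of_mem hx, glue_of_mem hy] at hxy
    exact hf hx hy hxy
  · rw [glue_of_mem hx, glue_apply hρ hw (absurd · hws)] at hxy
    exact absurd hxy (hdisj x hx w hw hws)
  · rw [glue_of_mem hy, glue_apply hρ hv (absurd · hvs)] at hxy
    exact absurd hxy.symm (hdisj y hy v hv hvs)
  · rw [glue_apply hρ hv (absurd · hvs), glue_apply hρ hw (absurd · hws)] at hxy
    rw [hσ hv hw hxy]

theorem image_glue (hρ : Set.InjOn ρ t) (hcompat : ∀ v ∈ t, ρ v ∈ s → σ v = f (ρ v)) :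
    (s ∪ t.image ρ).image (glue s f t ρ σ) = s.image f ∪ t.image σ := by
  rw [Finset.image_union, Finset.image_image]
  congr 1
  · exact Finset.image_congr fun x hx => glue_of_mem hx
  · exact Finset.image_congr fun v hv => glue_apply hρ hv (hcompat v hv)

end Glue

structure IsIso (g g' : HGraph L) (f fe : ℕ → ℕ) : Prop where
  bijOn_V : Set.BijOn f g.V g'.V
  bijOn_E : Set.BijOn fe g.E g'.E
  att_map : ∀ e ∈ g.E, g'.att (fe e) = (g.att e).map f
  lab_map : ∀ e ∈ g.E, g'.lab (fe e) = g.lab e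
  ext_map : g'.ext = g.ext.map f

theorem isomorphic_iff {g g' : HGraph L} : g.Isomorphic g' ↔ ∃ f fe, IsIso g g' f fe :=
  ⟨fun ⟨f, fe, h1, h2, h3, h4, h5⟩ => ⟨f, fe, h1, h2, h3, h4, h5⟩,
    fun ⟨f, fe, h1, h2, h3, h4, h5⟩ => ⟨f, fe, h1, h2, h3, h4, h5⟩⟩

theorem Isomorphic.refl (g : HGraph L) : g.Isomorphic g :=
  ⟨id, id, Set.bijOn_id _, Set.bijOn_id _, fun _ _ => by simp, fun _ _ => rfl, by simp⟩

theorem Isomorphic.trans {g₁ g₂ g₃ : HGraph L} (h₁₂ : g₁.Isomorphic g₂)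
    (h₂₃ : g₂.Isomorphic g₃) : g₁.Isomorphic g₃ := by
  obtain ⟨f, fe, hV, hE, hatt, hlab, hext⟩ := h₁₂
  obtain ⟨f', fe', hV', hE', hatt', hlab', hext'⟩ := h₂₃
  refine ⟨f' ∘ f, fe' ∘ fe, hV'.comp hV, hE'.comp hE, fun e he => ?_, fun e he => ?_, ?_⟩
  · rw [Function.comp_apply, hatt' _ (hE.mapsTo he), hatt e he, List.map_map]
  · rw [Function.comp_apply, hlab' _ (hE.mapsTo he), hlab e he]
  · rw [hext', hext, List.map_map]

structure Embeds (g g' : HGraph L) (f fe : ℕ → ℕ) : Prop where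
  injOn : Set.InjOn f g.V
  mapsTo_V : Set.MapsTo f g.V g'.V
  mapsTo_E : Set.MapsTo fe g.E g'.E
  att_map : ∀ e ∈ g.E, g'.att (fe e) = (g.att e).map f

theorem Embeds.comp {g₁ g₂ g₃ : HGraph L} {f fe f' fe' : ℕ → ℕ} (h₂₃ : g₂.Embeds g₃ f' fe')
    (h₁₂ : g₁.Embeds g₂ f fe) : g₁.Embeds g₃ (f' ∘ f) (fe' ∘ fe) :=
  ⟨h₂₃.injOn.comp h₁₂.injOn h₁₂.mapsTo_V, h₂₃.mapsTo_V.comp h₁₂.mapsTo_V,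
    h₂₃.mapsTo_E.comp h₁₂.mapsTo_E, fun e he => by
      rw [Function.comp_apply, h₂₃.att_map _ (h₁₂.mapsTo_E he), h₁₂.att_map e he, List.map_map]⟩

theorem IsIso.embeds {g g' : HGraph L} {f fe : ℕ → ℕ} (iso : g.IsIso g' f fe) :
    g.Embeds g' f fe :=
  ⟨iso.bijOn_V.injOn, iso.bijOn_V.mapsTo, iso.bijOn_E.mapsTo, iso.att_map⟩

theorem Replaces.embeds {g h g' : HGraph L} {e₀ : ℕ} {ρ η : ℕ → ℕ}
    (R : g.Replaces e₀ h g' ρ η) : h.Embeds g' ρ η :=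
  ⟨R.injOn_node, fun _ hv => R.mem_V_of_mem_rhs hv, fun _ he => R.mem_E_of_mem_rhs he, R.att_new⟩

namespace Replaces

variable {g h g₁ : HGraph L} {e₀ : ℕ} {ρ η f fe σ τ : ℕ → ℕ}

theorem glue_edge_apply (R : Replaces g e₀ h g₁ ρ η) {y : ℕ} (hy : y ∈ h.E) :
    glue (g.E.erase e₀) fe h.E η τ (η y) = τ y :=
  glue_apply R.injOn_edge hy fun hmem => absurd (Finset.mem_of_mem_erase hmem) (R.edge_fresh y hy)

theorem injOn_glue_edge (R : Replaces g e₀ h g₁ ρ η) (hfe : Set.InjOn fe (g.E.erase e₀))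
    (hτ : Set.InjOn τ h.E) (hdisj : ∀ x ∈ g.E.erase e₀, ∀ y ∈ h.E, fe x ≠ τ y) :
    Set.InjOn (glue (g.E.erase e₀) fe h.E η τ) g₁.E :=
  R.E_eq ▸ injOn_glue hfe R.injOn_edge hτ fun x hx y hy _ => hdisj x hx y hy

theorem image_glue_edge (R : Replaces g e₀ h g₁ ρ η) :
    g₁.E.image (glue (g.E.erase e₀) fe h.E η τ) = (g.E.erase e₀).image fe ∪ h.E.image τ :=
  R.E_eq ▸ image_glue R.injOn_edge
    (fun y hy hmem => absurd (Finset.mem_of_mem_erase hmem) (R.edge_fresh y hy))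

theorem att_glue {X : HGraph L} (R : Replaces g e₀ h g₁ ρ η) (hg : g.WF rk) (hh : h.WF rk)
    (hcompat : ∀ v ∈ h.V, ρ v ∈ g.V → σ v = f (ρ v))
    (hold : ∀ x ∈ g.E.erase e₀, X.att (fe x) = (g.att x).map f)
    (hnew : ∀ y ∈ h.E, X.att (τ y) = (h.att y).map σ) {x : ℕ} (hx : x ∈ g₁.E) :
    X.att (glue (g.E.erase e₀) fe h.E η τ x) = (g₁.att x).map (glue g.V f h.V ρ σ) := by
  rcases R.mem_E_cases hx with ⟨hx, hne⟩ | ⟨y, hy, rfl⟩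
  · have hx' : x ∈ g.E.erase e₀ := Finset.mem_erase.2 ⟨hne, hx⟩
    rw [glue_of_mem hx', hold x hx', R.att_old x hx']
    exact List.map_congr_left fun v hv => (glue_of_mem (hg.att_mem hx hv)).symm
  · rw [R.glue_edge_apply hy, hnew y hy, R.att_new y hy, List.map_map]
    exact List.map_congr_left fun v hv =>
      (glue_apply R.injOn_node (hh.att_mem hy hv) (hcompat v (hh.att_mem hy hv))).symm

theorem lab_glue {X : HGraph L} (R : Replaces g e₀ h g₁ ρ η)
    (hold : ∀ x ∈ g.E.erase e₀, X.lab (fe x) = g.lab x)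
    (hnew : ∀ y ∈ h.E, X.lab (τ y) = h.lab y) {x : ℕ} (hx : x ∈ g₁.E) :
    X.lab (glue (g.E.erase e₀) fe h.E η τ x) = g₁.lab x := by
  rcases R.mem_E_cases hx with ⟨hx, hne⟩ | ⟨y, hy, rfl⟩
  · have hx' : x ∈ g.E.erase e₀ := Finset.mem_erase.2 ⟨hne, hx⟩
    rw [glue_of_mem hx', hold x hx', R.lab_old x hx']
  · rw [R.glue_edge_apply hy, hnew y hy, R.lab_new y hy]

theorem compat_of_ext_map (R : Replaces g e₀ h g₁ ρ η)
    (hmap : h.ext.map σ = (g.att e₀).map f) {v : ℕ} (hv : v ∈ h.V) (hρv : ρ v ∈ g.V) :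
    σ v = f (ρ v) := by
  rw [← R.ext_map, List.map_map] at hmap
  exact List.map_inj_left.1 hmap v (R.mem_ext_of_mem hv hρv)

variable {g' g₁' : HGraph L} {ρ' η' : ℕ → ℕ}

theorem isomorphic (R : Replaces g e₀ h g₁ ρ η) (R' : Replaces g' (fe e₀) h g₁' ρ' η')
    (iso : IsIso g g' f fe) (hg : g.WF rk) (hh : h.WF rk) (he₀ : e₀ ∈ g.E) :
    g₁.Isomorphic g₁' := by
  have hcompat : ∀ v ∈ h.V, ρ v ∈ g.V → ρ' v = f (ρ v) := fun v hv =>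
    R.compat_of_ext_map (by rw [R'.ext_map, iso.att_map e₀ he₀]) hv
  have hfresh : ∀ v ∈ h.V, ρ v ∉ g.V → ρ' v ∉ g'.V := fun v hv hρv =>
    R'.node_fresh v hv fun hve => hρv (hg.att_mem he₀ (R.mem_att_of_mem_ext hve))
  have hEerase : (g.E.erase e₀).image fe = g'.E.erase (fe e₀) := by
    rw [Finset.image_erase_of_injOn iso.bijOn_E.injOn he₀, Finset.image_eq_of_bijOn iso.bijOn_E]
  refine ⟨glue g.V f h.V ρ ρ', glue (g.E.erase e₀) fe h.E η η', ?_, ?_, ?_, ?_, ?_⟩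
  · refine Finset.bijOn_of_injOn_of_image_eq (R.V_eq ▸ injOn_glue iso.bijOn_V.injOn R.injOn_node
      R'.injOn_node fun x hx v hv hρv hxv => hfresh v hv hρv ?_) ?_
    · exact hxv ▸ iso.bijOn_V.mapsTo hx
    · rw [R.V_eq, image_glue R.injOn_node hcompat, Finset.image_eq_of_bijOn iso.bijOn_V, R'.V_eq]
  · refine Finset.bijOn_of_injOn_of_image_eq (R.injOn_glue_edge
      (iso.bijOn_E.injOn.mono (Finset.erase_subset _ _)) R'.injOn_edge
      fun x hx y hy hxy => R'.edge_fresh y hy ?_) ?_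
    · exact hxy ▸ iso.bijOn_E.mapsTo (Finset.mem_of_mem_erase hx)
    · rw [R.image_glue_edge, hEerase, R'.E_eq]
  · refine fun x hx => R.att_glue hg hh hcompat (fun x hx => ?_) R'.att_new hx
    rw [R'.att_old _ (hEerase ▸ Finset.mem_image_of_mem fe hx),
      iso.att_map x (Finset.mem_of_mem_erase hx)]
  · refine fun x hx => R.lab_glue (fun x hx => ?_) R'.lab_new hx
    rw [R'.lab_old _ (hEerase ▸ Finset.mem_image_of_mem fe hx),
      iso.lab_map x (Finset.mem_of_mem_erase hx)]
  · rw [R'.ext_eq, R.ext_eq, iso.ext_map]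
    exact List.map_congr_left fun v hv => (glue_of_mem (hg.ext_mem hv)).symm

end Replaces

namespace Replaces

variable {k g r C : HGraph L} {e₀ e : ℕ} {φV φE : ℕ → ℕ}

theorem mem_erase_image (Rk : Replaces k e₀ g C φV φE) {x : ℕ} (hx : x ∈ g.E) {y : ℕ}
    (hy : y ∈ g.E) (hne : x ≠ y) : φE x ∈ C.E.erase (φE y) :=
  Finset.mem_erase.2 ⟨fun h => hne (Rk.injOn_edge hx hy h), Rk.mem_E_of_mem_rhs hx⟩

theorem mem_erase_of_mem (Rk : Replaces k e₀ g C φV φE) {x : ℕ} (hx : x ∈ k.E.erase e₀)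
    {y : ℕ} (hy : y ∈ g.E) : x ∈ C.E.erase (φE y) :=
  Finset.mem_erase.2 ⟨fun h => Rk.edge_fresh y hy (h ▸ Finset.mem_of_mem_erase hx),
    Rk.mem_E_of_mem (Finset.mem_of_mem_erase hx) (Finset.mem_erase.1 hx).1⟩

theorem exists_comm (Rk : Replaces k e₀ g C φV φE) (hk : k.WF rk) (he₀ : e₀ ∈ k.E)
    (he : e ∈ k.E) (hne : e ≠ e₀) (hr : r.ext.Nodup) (hlen : r.ext.length = (k.att e).length) :
    ∃ k₂ C₂ ρ η, Replaces k e r k₂ ρ η ∧ Replaces C e r C₂ ρ η ∧ Replaces k₂ e₀ g C₂ φV φE := by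
  obtain ⟨k₂, ρ, η, Rk₂, hfreshV, hfreshE⟩ := exists_replaces hk he hr hlen (C.V ∪ C.E)
  have hold : ∀ x ∈ k₂.E.erase e₀, (x ∈ k.E.erase e₀ ∧ x ∈ k.E.erase e ∧ x ∈ C.E.erase e) ∨
      ∃ y ∈ r.E, η y = x := by
    intro x hx
    obtain ⟨hxe₀, hx⟩ := Finset.mem_erase.1 hx
    refine (Rk₂.mem_E_cases hx).imp_left fun ⟨hxk, hxe⟩ => ?_
    have hx' : x ∈ k.E.erase e₀ := Finset.mem_erase.2 ⟨hxe₀, hxk⟩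
    exact ⟨hx', Finset.mem_erase.2 ⟨hxe, hxk⟩, Finset.mem_erase.2 ⟨hxe, Rk.mem_E_of_mem hxk hxe₀⟩⟩
  have hφE : ∀ x ∈ g.E, φE x ∈ C.E.erase e := fun x hx =>
    Finset.mem_erase.2 ⟨fun h => Rk.edge_fresh x hx (h ▸ he), Rk.mem_E_of_mem_rhs hx⟩
  have RC : Replaces C e r (replace C e r ρ η) ρ η :=
    replaces_replace Rk₂.injOn_node Rk₂.injOn_edge
      (fun v hv hve hmem => hfreshV v hv hve (Finset.mem_union_left _ hmem))
      (by rw [Rk₂.ext_map, Rk.att_old e (Finset.mem_erase.2 ⟨hne, he⟩)])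
      (fun y hy hmem => hfreshE y hy (Finset.mem_union_right _ hmem))
  refine ⟨k₂, _, ρ, η, Rk₂, RC, Rk.injOn_node, Rk.injOn_edge, fun v hv hve hmem => ?_, ?_,
    fun x hx hmem => ?_, ?_, ?_, fun x hx => ?_, fun x hx => ?_, fun x hx => ?_, fun x hx => ?_,
    by rw [RC.ext_eq, Rk.ext_eq, Rk₂.ext_eq]⟩
  · rcases Rk₂.mem_V_cases hk he hmem with hmem | ⟨w, hw, hwe, hρw⟩
    · exact Rk.node_fresh v hv hve hmem
    · exact hfreshV w hw hwe (Finset.mem_union_left _ (hρw ▸ Rk.mem_V_of_mem_rhs hv))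
  · rw [Rk.ext_map, Rk₂.att_old e₀ (Finset.mem_erase.2 ⟨hne.symm, he₀⟩)]
  · rcases Rk₂.mem_E_cases hmem with ⟨hmem, -⟩ | ⟨y, hy, hηy⟩
    · exact Rk.edge_fresh x hx hmem
    · exact hfreshE y hy (Finset.mem_union_right _ (hηy ▸ Rk.mem_E_of_mem_rhs hx))
  · rw [RC.V_eq, Rk.V_eq, Rk₂.V_eq, Finset.union_right_comm]
  · have he_img : e ∉ g.E.image φE := fun h => by
      obtain ⟨x, hx, hxe⟩ := Finset.mem_image.1 h
      exact (Finset.mem_erase.1 (hφE x hx)).1 hxe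
    rw [RC.E_eq, Rk.E_eq, Rk₂.E_eq, Finset.erase_union_distrib, Finset.erase_union_distrib,
      Finset.erase_right_comm, Finset.erase_eq_of_notMem (Rk₂.not_mem_image_edge he₀),
      Finset.erase_eq_of_notMem he_img, Finset.union_right_comm]
  · rcases hold x hx with ⟨h₀, h₁, h₂⟩ | ⟨y, hy, rfl⟩
    · rw [RC.att_old x h₂, Rk.att_old x h₀, Rk₂.att_old x h₁]
    · rw [RC.att_new y hy, Rk₂.att_new y hy]
  · rcases hold x hx with ⟨h₀, h₁, h₂⟩ | ⟨y, hy, rfl⟩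
    · rw [RC.lab_old x h₂, Rk.lab_old x h₀, Rk₂.lab_old x h₁]
    · rw [RC.lab_new y hy, Rk₂.lab_new y hy]
  · rw [RC.att_old _ (hφE x hx), Rk.att_new x hx]
  · rw [RC.lab_old _ (hφE x hx), Rk.lab_new x hx]

/-- Replacing an edge of `g` inside `k[e₀/g]` yields `k[e₀/g[e/r]]`. -/
theorem exists_assoc {g₂ : HGraph L} {ρ η : ℕ → ℕ} (Rk : Replaces k e₀ g C φV φE)
    (Rg : Replaces g e r g₂ ρ η) (hk : k.WF rk) (hg : g.WF rk) (hr : r.WF rk) (he : e ∈ g.E) :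
    ∃ C₂ ρ' η' φV' φE', Replaces C (φE e) r C₂ ρ' η' ∧ Replaces k e₀ g₂ C₂ φV' φE' := by
  have hCatt : C.att (φE e) = (g.att e).map φV := Rk.att_new e he
  obtain ⟨C₂, ρ', η', RC, -, hfreshE⟩ := exists_replaces (Rk.wf hk hg) (Rk.mem_E_of_mem_rhs he)
    hr.ext_nodup (by rw [hCatt, List.length_map, ← Rg.ext_map, List.length_map]) k.E
  have hcompat : ∀ v ∈ r.V, ρ v ∈ g.V → ρ' v = φV (ρ v) := fun v hv =>
    Rg.compat_of_ext_map (by rw [RC.ext_map, hCatt]) hv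
  have hfreshV : ∀ v ∈ r.V, ρ v ∉ g.V → ρ' v ∉ C.V := fun v hv hρv =>
    RC.node_fresh v hv fun hve => hρv (hg.att_mem he (Rg.mem_att_of_mem_ext hve))
  refine ⟨C₂, ρ', η', glue g.V φV r.V ρ ρ', glue (g.E.erase e) φE r.E η η', RC,
    Rg.V_eq ▸ injOn_glue Rk.injOn_node Rg.injOn_node RC.injOn_node
      (fun x hx v hv hρv hxv => hfreshV v hv hρv (hxv ▸ Rk.mem_V_of_mem_rhs hx)),
    Rg.injOn_glue_edge (Rk.injOn_edge.mono (Finset.erase_subset _ _)) RC.injOn_edge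
      (fun x hx y hy hxy =>
        RC.edge_fresh y hy (hxy ▸ Rk.mem_E_of_mem_rhs (Finset.mem_of_mem_erase hx))),
    fun v hv hve => ?_, ?_, fun x hx => ?_, ?_, ?_, fun x hx => ?_, fun x hx => ?_,
    fun x hx => ?_, fun x hx => ?_, by rw [RC.ext_eq, Rk.ext_eq]⟩
  · rcases Rg.mem_V_cases hg he hv with hv | ⟨w, hw, hwe, rfl⟩
    · rw [glue_of_mem hv]
      exact Rk.node_fresh v hv (Rg.ext_eq ▸ hve)
    · rw [glue_apply Rg.injOn_node hw (hcompat w hw)]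
      exact fun hmem => hfreshV w hw (Rg.node_fresh w hw hwe) (Rk.mem_V_of_mem hmem)
  · rw [Rg.ext_eq, ← Rk.ext_map]
    exact List.map_congr_left fun v hv => glue_of_mem (hg.ext_mem hv)
  · rcases Rg.mem_E_cases hx with ⟨hx, hne⟩ | ⟨y, hy, rfl⟩
    · rw [glue_of_mem (Finset.mem_erase.2 ⟨hne, hx⟩)]
      exact Rk.edge_fresh x hx
    · rw [Rg.glue_edge_apply hy]
      exact hfreshE y hy
  · rw [RC.V_eq, Rk.V_eq, Rg.V_eq, image_glue Rg.injOn_node hcompat, Finset.union_assoc]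
  · rw [RC.E_eq, Rk.E_eq, Rg.image_glue_edge, Finset.erase_union_distrib,
      Finset.erase_eq_of_notMem fun h => Rk.edge_fresh e he (Finset.mem_of_mem_erase h),
      ← Finset.image_erase_of_injOn Rk.injOn_edge he, Finset.union_assoc]
  · rw [RC.att_old x (Rk.mem_erase_of_mem hx he), Rk.att_old x hx]
  · rw [RC.lab_old x (Rk.mem_erase_of_mem hx he), Rk.lab_old x hx]
  · refine Rg.att_glue hg hr hcompat (fun x hx => ?_) RC.att_new hx
    obtain ⟨hne, hx⟩ := Finset.mem_erase.1 hx
    rw [RC.att_old _ (Rk.mem_erase_image hx he hne), Rk.att_new x hx]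
  · refine Rg.lab_glue (fun x hx => ?_) RC.lab_new hx
    obtain ⟨hne, hx⟩ := Finset.mem_erase.1 hx
    rw [RC.lab_old _ (Rk.mem_erase_image hx he hne), Rk.lab_new x hx]

end Replaces

section Paths

variable {g g' : HGraph L} {f fe : ℕ → ℕ}

theorem IsPath.map (hE : Set.MapsTo fe g.E g'.E) (hatt : ∀ e ∈ g.E, g'.att (fe e) = (g.att e).map f)
    {p : List ℕ} {s t : ℕ} (hp : g.IsPath p s t) : g'.IsPath (p.map fe) (f s) (f t) := by
  obtain ⟨hne, hmem, ⟨e, he, hs⟩, hchain, ⟨e', he', ht⟩⟩ := hp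
  have hmap_tail : ∀ a ∈ p, ∀ v ∈ (g.att a).tail, f v ∈ (g'.att (fe a)).tail := fun a ha v hv => by
    rw [hatt a (hmem a ha), ← List.map_tail]
    exact List.mem_map_of_mem hv
  have hmap_head : ∀ a ∈ p, ∀ v, (g.att a).head? = some v → (g'.att (fe a)).head? = some (f v) :=
    fun a ha v hv => by rw [hatt a (hmem a ha), List.head?_map, hv]; rfl
  refine ⟨by simpa using hne, fun x hx => ?_, ⟨fe e, by simp [he], ?_⟩,
    (List.isChain_map fe).2 (hchain.imp_of_mem_imp fun a b ha hb ⟨v, hv, hva⟩ =>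
      ⟨f v, hmap_head b hb v hv, hmap_tail a ha v hva⟩), ⟨fe e', by simp [he'], ?_⟩⟩
  · obtain ⟨y, hy, rfl⟩ := List.mem_map.1 hx
    exact hE (hmem y hy)
  · exact hmap_head e (List.mem_of_mem_head? he) s hs
  · exact hmap_tail e' (List.mem_of_mem_getLast? he') t ht

theorem InternalPath.map (hf : g.Embeds g' f fe) (hg : g.WF rk) (hext : g'.ext = g.ext.map f)
    {p : List ℕ} {s t : ℕ} (hp : g.InternalPath p s t) :
    g'.InternalPath (p.map fe) (f s) (f t) := by
  refine ⟨hp.1.map hf.mapsTo_E hf.att_map, fun e' he' w hw hwext => ?_⟩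
  rw [← List.map_tail] at he'
  obtain ⟨e, he, rfl⟩ := List.mem_map.1 he'
  have heE : e ∈ g.E := hp.1.2.1 e (List.mem_of_mem_tail he)
  rw [hf.att_map e heE, List.head?_map] at hw
  obtain ⟨v, hv, rfl⟩ := Option.map_eq_some_iff.1 hw
  have hvV : v ∈ g.V := hg.att_mem heE (List.mem_of_mem_head? hv)
  rw [hext, List.mem_map] at hwext
  obtain ⟨y, hy, hyv⟩ := hwext
  exact hp.2 e he v hv (hf.injOn (hg.ext_mem hy) hvV hyv ▸ hy)

theorem IsPath.head {e : ℕ} {p : List ℕ} {s t : ℕ} (hp : g.IsPath (e :: p) s t) :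
    e ∈ g.E ∧ (g.att e).head? = some s := by
  obtain ⟨-, hmem, ⟨e', he', hs⟩, -⟩ := hp
  obtain rfl : e' = e := (Option.some.inj he').symm
  exact ⟨hmem e' List.mem_cons_self, hs⟩

theorem IsPath.singleton_mem_tail {e s t : ℕ} (hp : g.IsPath [e] s t) : t ∈ (g.att e).tail := by
  obtain ⟨-, -, -, -, ⟨e', he', ht⟩⟩ := hp
  obtain rfl : e' = e := (Option.some.inj he').symm
  exact ht

theorem IsPath.cons_cons {e e₂ : ℕ} {p : List ℕ} {s t : ℕ} (hp : g.IsPath (e :: e₂ :: p) s t) :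
    ∃ v, v ∈ (g.att e).tail ∧ g.IsPath (e₂ :: p) v t := by
  obtain ⟨-, hmem, -, hchain, ⟨e', he', ht⟩⟩ := hp
  obtain ⟨⟨v, hv, hve⟩, hchain⟩ := List.isChain_cons_cons.1 hchain
  exact ⟨v, hve, List.cons_ne_nil _ _, fun x hx => hmem x (List.mem_cons_of_mem _ hx),
    ⟨e₂, rfl, hv⟩, hchain, ⟨e', by rwa [List.getLast?_cons_cons] at he', ht⟩⟩

end Paths

end HGraph

namespace RankedTree

variable {L : Type} (t : RankedTree L)

theorem pos_lt_pos {u v : List ℕ} (hu : u ∈ t.D) (huv : List.Lex (· < ·) u v) :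
    t.pos u < t.pos v := by
  refine Finset.card_lt_card ⟨fun w hw => ?_, fun hsub => ?_⟩
  · obtain ⟨hw, hwu⟩ := Finset.mem_filter.1 hw
    exact Finset.mem_filter.2 ⟨hw, List.lex_trans (fun h₁ h₂ => h₁.trans h₂) hwu huv⟩
  · exact irrefl u (Finset.mem_filter.1 (hsub (Finset.mem_filter.2 ⟨hu, huv⟩))).2

theorem injOn_pos : Set.InjOn t.pos t.D := by
  intro u hu v hv h
  rcases trichotomous_of (List.Lex (· < ·)) u v with huv | rfl | hvu
  · exact absurd h (t.pos_lt_pos hu huv).ne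
  · rfl
  · exact absurd h (t.pos_lt_pos hv hvu).ne'

theorem image_pos : t.D.image t.pos = Finset.range t.D.card := by
  refine Finset.eq_of_subset_of_card_le (fun x hx => ?_) ?_
  · obtain ⟨u, hu, rfl⟩ := Finset.mem_image.1 hx
    refine Finset.mem_range.2 (Finset.card_lt_card ⟨Finset.filter_subset _ _, fun hsub => ?_⟩)
    exact irrefl u (Finset.mem_filter.1 (hsub hu)).2
  · rw [Finset.card_range, Finset.card_image_of_injOn t.injOn_pos]

noncomputable def addr (x : ℕ) : List ℕ :=
  Function.invFunOn t.pos t.D x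

theorem addr_pos {u : List ℕ} (hu : u ∈ t.D) : t.addr (t.pos u) = u :=
  t.injOn_pos.leftInvOn_invFunOn hu

theorem pos_addr {x : ℕ} (hx : x < t.D.card) : t.addr x ∈ t.D ∧ t.pos (t.addr x) = x := by
  obtain ⟨u, hu, rfl⟩ := Finset.mem_image.1 (t.image_pos ▸ Finset.mem_range.2 hx)
  rw [t.addr_pos hu]
  exact ⟨hu, rfl⟩

end RankedTree

theorem List.eq_or_eq_of_prefix_of_prefix_concat {α : Type*} {u w : List α} {j : α} (huw : u <+: w)
    (hw : w <+: u ++ [j]) : w = u ∨ w = u ++ [j] := by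
  have h₁ := huw.length_le
  have h₂ := hw.length_le
  simp only [List.length_append, List.length_singleton] at h₂
  rcases Nat.lt_or_ge u.length w.length with hlt | hge
  · exact Or.inr (hw.eq_of_length (by simp; omega))
  · exact Or.inl (huw.eq_of_length (by omega)).symm

namespace IsTGraphOf

variable {L : Type} {rk : L → ℕ} {t : RankedTree L} {g : HGraph L}

theorem exists_of_mem_E (htg : IsTGraphOf rk t g) (ht : t.WF rk) {e : ℕ} (he : e ∈ g.E) :
    ∃ u ∈ t.D, (g.att e).head? = some (t.pos u) ∧
      ∀ x ∈ (g.att e).tail, ∃ j, u ++ [j] ∈ t.D ∧ x = t.pos (u ++ [j]) := by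
  obtain ⟨hu, hpos⟩ := t.pos_addr (Finset.mem_range.1 (htg.2.1 ▸ he))
  obtain ⟨hatt, -⟩ := htg.2.2.1 _ hu
  rw [hpos] at hatt
  refine ⟨t.addr e, hu, by rw [hatt, hpos]; rfl, fun x hx => ?_⟩
  rw [hatt, List.tail_cons, List.mem_map] at hx
  obtain ⟨j, hj, rfl⟩ := hx
  exact ⟨j + 1, ht.2.2 _ hu (j + 1) (by omega) (by simpa using hj), rfl⟩

theorem isPath (htg : IsTGraphOf rk t g) (ht : t.WF rk) {p : List ℕ} {s x : ℕ}
    (hp : g.IsPath p s x) :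
    ∃ ws ∈ t.D, ∃ wt ∈ t.D, s = t.pos ws ∧ x = t.pos wt ∧ ws <+: wt ∧ ws ≠ wt ∧
      ∀ w, ws <+: w → w <+: wt → w ≠ ws → w ≠ wt →
        ∃ e ∈ p.tail, (g.att e).head? = some (t.pos w) := by
  induction p generalizing s with
  | nil => exact absurd rfl hp.1
  | cons e p ih =>
    obtain ⟨he, hs⟩ := hp.head
    obtain ⟨u, hu, hsu, hchild⟩ := htg.exists_of_mem_E ht he
    obtain rfl : s = t.pos u := Option.some.inj (hs.symm.trans hsu)
    cases p with
    | nil =>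
      obtain ⟨j, hj, rfl⟩ := hchild x hp.singleton_mem_tail
      refine ⟨u, hu, u ++ [j], hj, rfl, rfl, List.prefix_append _ _, by simp, ?_⟩
      intro w huw hw hwu hwj
      exact absurd (List.eq_or_eq_of_prefix_of_prefix_concat huw hw) (by tauto)
    | cons e₂ p =>
      obtain ⟨v, hv, hp'⟩ := hp.cons_cons
      obtain ⟨j, hj, rfl⟩ := hchild v hv
      obtain ⟨ws, hws, wt, hwt, hvws, rfl, hpre, hne, hbetween⟩ := ih hp'
      obtain rfl : ws = u ++ [j] := t.injOn_pos hws hj hvws.symm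
      refine ⟨u, hu, wt, hwt, rfl, rfl, (List.prefix_append _ _).trans hpre,
        fun h => by simpa [h] using hpre.length_le, fun w huw hw hwu hwt => ?_⟩
      have hhead : ∃ e ∈ (e :: e₂ :: p).tail, (g.att e).head? = some (t.pos (u ++ [j])) :=
        ⟨e₂, List.mem_cons_self, hp'.head.2⟩
      rcases List.prefix_or_prefix_of_prefix hw hpre with hwj | hjw
      · obtain rfl | rfl := List.eq_or_eq_of_prefix_of_prefix_concat huw hwj
        · exact absurd rfl hwu
        · exact hhead
      · by_cases hwj : w = u ++ [j]
        · exact hwj ▸ hhead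
        · obtain ⟨e', he', hw'⟩ := hbetween w hjw hw hwj hwt
          exact ⟨e', List.mem_cons_of_mem _ he', hw'⟩

variable {h : HGraph L} {Ψ ΨE : ℕ → ℕ}

theorem pos_addr_comp (htg : IsTGraphOf rk t g) (hΨ : h.Embeds g Ψ ΨE) {x : ℕ} (hx : x ∈ h.V) :
    t.pos (t.addr (Ψ x)) = Ψ x :=
  (t.pos_addr (Finset.mem_range.1 (htg.1 ▸ hΨ.mapsTo_V hx))).2

theorem injOn_addr_comp (htg : IsTGraphOf rk t g) (hΨ : h.Embeds g Ψ ΨE) :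
    Set.InjOn (t.addr ∘ Ψ) h.V := fun x hx y hy hxy =>
  hΨ.injOn hx hy <| by
    rw [← htg.pos_addr_comp hΨ hx, ← htg.pos_addr_comp hΨ hy]
    exact congrArg _ hxy

theorem addr_of_internalPath (htg : IsTGraphOf rk t g) (ht : t.WF rk) (hh : h.WF rk)
    (hΨ : h.Embeds g Ψ ΨE) {p : List ℕ} {u v : ℕ} (hp : h.InternalPath p u v) :
    t.addr (Ψ u) <+: t.addr (Ψ v) ∧ t.addr (Ψ u) ≠ t.addr (Ψ v) ∧
      ∀ z ∈ h.ext, t.addr (Ψ u) <+: t.addr (Ψ z) → t.addr (Ψ z) <+: t.addr (Ψ v) →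
        t.addr (Ψ z) = t.addr (Ψ u) ∨ t.addr (Ψ z) = t.addr (Ψ v) := by
  -- declaring the images of the external nodes of `h` external makes internality transfer
  have hp' := hp.map (g' := { g with ext := h.ext.map Ψ }) ⟨hΨ.1, hΨ.2, hΨ.3, hΨ.4⟩ hh rfl
  obtain ⟨ws, hws, wt, hwt, hu, hv, hpre, hne, hbetween⟩ := htg.isPath ht hp'.1
  rw [hu, hv, t.addr_pos hws, t.addr_pos hwt]
  refine ⟨hpre, hne, fun z hz hwz hzw => ?_⟩
  by_contra hout
  push Not at hout
  obtain ⟨e, he, hze⟩ := hbetween _ hwz hzw hout.1 hout.2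
  rw [htg.pos_addr_comp hΨ (hh.ext_mem hz)] at hze
  exact hp'.2 e he _ hze (List.mem_map_of_mem hz)

end IsTGraphOf

namespace HRGrammar

open HGraph Relation

variable {T : Type} {G : HRGrammar T} {rkT : T → ℕ}

theorem WF.rhs_wf (hWF : G.WF rkT) {A : ℕ} (hA : A ∈ G.NT) : (G.rhs A).WF (G.rk rkT) :=
  (hWF.2.2.2.1 A hA).1

structure WFGraph (G : HRGrammar T) (rkT : T → ℕ) (g : HGraph (T ⊕ ℕ)) : Prop where
  wf : g.WF (G.rk rkT)
  lab_mem : ∀ e ∈ g.E, ∀ B : ℕ, g.lab e = Sum.inr B → B ∈ G.NT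

theorem WF.wfGraph_rhs (hWF : G.WF rkT) {A : ℕ} (hA : A ∈ G.NT) : G.WFGraph rkT (G.rhs A) :=
  ⟨hWF.rhs_wf hA, hWF.2.2.2.2.2 A hA⟩

theorem WF.wfGraph_S (hWF : G.WF rkT) : G.WFGraph rkT G.S :=
  ⟨hWF.2.2.1, hWF.2.2.2.2.1⟩

theorem WFGraph.rhs_ext_length (hWF : G.WF rkT) {g : HGraph (T ⊕ ℕ)} (hg : G.WFGraph rkT g)
    {e B : ℕ} (he : e ∈ g.E) (hB : g.lab e = Sum.inr B) :
    (G.rhs B).ext.length = (g.att e).length := by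
  rw [(hWF.2.2.2.1 B (hg.lab_mem e he B hB)).2, hg.wf.att_length he, hB]
  rfl

theorem Derive.exists_replaces {g g' : HGraph (T ⊕ ℕ)} (h : G.Derive g g') :
    ∃ e ∈ g.E, ∃ A ∈ G.NT, g.lab e = Sum.inr A ∧ ∃ ρ η, g.Replaces e (G.rhs A) g' ρ η :=
  let ⟨e, he, A, hA, hlab, hR⟩ := h
  ⟨e, he, A, hA, hlab, isReplacement_iff.1 hR⟩

theorem _root_.HGraph.Replaces.derive {g g' : HGraph (T ⊕ ℕ)} {e A : ℕ} {ρ η : ℕ → ℕ}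
    (R : g.Replaces e (G.rhs A) g' ρ η) (he : e ∈ g.E) (hA : A ∈ G.NT)
    (hlab : g.lab e = Sum.inr A) : G.Derive g g' :=
  ⟨e, he, A, hA, hlab, isReplacement_iff.2 ⟨ρ, η, R⟩⟩

theorem Derive.ext_eq {g g' : HGraph (T ⊕ ℕ)} (h : G.Derive g g') : g'.ext = g.ext :=
  let ⟨_, _, _, _, _, _, _, R⟩ := h.exists_replaces
  R.ext_eq

theorem derives_ext_eq {g g' : HGraph (T ⊕ ℕ)} (h : ReflTransGen G.Derive g g') :
    g'.ext = g.ext := by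
  induction h with
  | refl => rfl
  | tail _ h ih => rw [h.ext_eq, ih]

theorem WFGraph.derive (hWF : G.WF rkT) {g g' : HGraph (T ⊕ ℕ)} (hg : G.WFGraph rkT g)
    (h : G.Derive g g') : G.WFGraph rkT g' := by
  obtain ⟨e, he, A, hA, hlab, ρ, η, R⟩ := h.exists_replaces
  refine ⟨R.wf hg.wf (hWF.rhs_wf hA), fun x hx B hB => ?_⟩
  rcases R.mem_E_cases hx with ⟨hx, hne⟩ | ⟨y, hy, rfl⟩
  · exact hg.lab_mem x hx B (R.lab_old x (Finset.mem_erase.2 ⟨hne, hx⟩) ▸ hB)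
  · exact (hWF.wfGraph_rhs hA).lab_mem y hy B (R.lab_new y hy ▸ hB)

theorem WFGraph.derives (hWF : G.WF rkT) {g g' : HGraph (T ⊕ ℕ)} (hg : G.WFGraph rkT g)
    (h : ReflTransGen G.Derive g g') : G.WFGraph rkT g' := by
  induction h with
  | refl => exact hg
  | tail _ h ih => exact ih.derive hWF h

theorem WFGraph.exists_replaces (hWF : G.WF rkT) {g : HGraph (T ⊕ ℕ)} (hg : G.WFGraph rkT g)
    {e B : ℕ} (he : e ∈ g.E) (hB : g.lab e = Sum.inr B) :
    ∃ g' ρ η, g.Replaces e (G.rhs B) g' ρ η :=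
  let ⟨g', ρ, η, R, _⟩ := HGraph.exists_replaces hg.wf he
    (hWF.rhs_wf (hg.lab_mem e he B hB)).ext_nodup (hg.rhs_ext_length hWF he hB) ∅
  ⟨g', ρ, η, R⟩

noncomputable def height (G : HRGrammar T) (B : ℕ) : ℕ :=
  (G.NT.filter (ReflTransGen G.dep B)).card

theorem height_pos {B : ℕ} (hB : B ∈ G.NT) : 0 < height G B :=
  Finset.card_pos.2 ⟨B, Finset.mem_filter.2 ⟨hB, .refl⟩⟩

theorem height_lt_of_dep (hSL : G.SL) {A B : ℕ} (h : G.dep A B) : height G B < height G A := by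
  refine Finset.card_lt_card ⟨fun C hC => ?_, fun hsub => ?_⟩
  · obtain ⟨hC, hBC⟩ := Finset.mem_filter.1 hC
    exact Finset.mem_filter.2 ⟨hC, .head h hBC⟩
  · obtain ⟨-, hBA⟩ := Finset.mem_filter.1 (hsub (Finset.mem_filter.2 ⟨h.1, .refl⟩))
    exact hSL.1 A (.head' h hBA)

noncomputable def weightBase (G : HRGrammar T) : ℕ :=
  (G.NT.sup fun A => (G.rhs A).E.card) + 1

noncomputable def labelWeight (G : HRGrammar T) : T ⊕ ℕ → ℕ :=
  Sum.elim (fun _ => 1) fun B => weightBase G ^ height G B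

/-- Since an edge labelled `B` outweighs all edges of `rhs B` together (`rhs_weight_lt`),
every derivation step decreases the weight. -/
noncomputable def weight (G : HRGrammar T) (s : Finset ℕ) (g : HGraph (T ⊕ ℕ)) : ℕ :=
  ∑ e ∈ s, labelWeight G (g.lab e)

theorem labelWeight_rhs_le (hWF : G.WF rkT) (hSL : G.SL) {A : ℕ} (hA : A ∈ G.NT) {e : ℕ}
    (he : e ∈ (G.rhs A).E) : labelWeight G ((G.rhs A).lab e) ≤ weightBase G ^ (height G A - 1) := by
  cases hl : (G.rhs A).lab e with
  | inl a => exact Nat.one_le_pow _ _ (by simp [weightBase])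
  | inr B =>
    have := height_lt_of_dep hSL ⟨hA, hWF.2.2.2.2.2 A hA e he B hl, e, he, hl⟩
    exact Nat.pow_le_pow_right (by simp [weightBase]) (by omega)

theorem rhs_weight_lt (hWF : G.WF rkT) (hSL : G.SL) {A : ℕ} (hA : A ∈ G.NT) :
    weight G (G.rhs A).E (G.rhs A) < labelWeight G (Sum.inr A) := by
  have hcard : (G.rhs A).E.card < weightBase G :=
    Nat.lt_succ_of_le (Finset.le_sup (f := fun A => (G.rhs A).E.card) hA)
  calc weight G (G.rhs A).E (G.rhs A)
      ≤ ∑ _e ∈ (G.rhs A).E, weightBase G ^ (height G A - 1) :=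
        Finset.sum_le_sum fun e he => labelWeight_rhs_le hWF hSL hA he
    _ = (G.rhs A).E.card * weightBase G ^ (height G A - 1) := by rw [Finset.sum_const, smul_eq_mul]
    _ < weightBase G * weightBase G ^ (height G A - 1) :=
        Nat.mul_lt_mul_of_lt_of_le hcard le_rfl (Nat.pow_pos (by simp [weightBase]))
    _ = labelWeight G (Sum.inr A) := by
        rw [← pow_succ', Nat.sub_add_cancel (height_pos hA)]
        rfl

theorem _root_.HGraph.Replaces.weight_lt (hWF : G.WF rkT) (hSL : G.SL) {g g' : HGraph (T ⊕ ℕ)}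
    {e A : ℕ} {ρ η : ℕ → ℕ} (R : g.Replaces e (G.rhs A) g' ρ η) (hA : A ∈ G.NT)
    (hlab : g.lab e = Sum.inr A) {s : Finset ℕ} (hs : s ⊆ g.E) (hes : e ∈ s) :
    weight G (s.erase e ∪ (G.rhs A).E.image η) g' < weight G s g := by
  have hdisj : Disjoint (s.erase e) ((G.rhs A).E.image η) :=
    Finset.disjoint_right.2 fun x hx hmem =>
      R.not_mem_image_edge (hs (Finset.mem_of_mem_erase hmem)) hx
  have hnew : weight G ((G.rhs A).E.image η) g' = weight G (G.rhs A).E (G.rhs A) := by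
    rw [weight, Finset.sum_image fun x hx y hy hxy => R.injOn_edge hx hy hxy]
    exact Finset.sum_congr rfl fun x hx => by rw [R.lab_new x hx]
  have hold : weight G (s.erase e) g' = weight G (s.erase e) g :=
    Finset.sum_congr rfl fun x hx => by
      rw [R.lab_old x (Finset.mem_erase.2 ⟨(Finset.mem_erase.1 hx).1,
        hs (Finset.mem_of_mem_erase hx)⟩)]
  have hsplit : weight G s g = weight G (s.erase e) g + labelWeight G (Sum.inr A) := by
    rw [weight, ← Finset.sum_erase_add _ _ hes, hlab]
    rfl
  rw [weight, Finset.sum_union hdisj, ← weight, ← weight, hnew, hold, hsplit]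
  have := rhs_weight_lt hWF hSL hA
  omega

theorem Derive.weight_lt (hWF : G.WF rkT) (hSL : G.SL) {g g' : HGraph (T ⊕ ℕ)}
    (h : G.Derive g g') : weight G g'.E g' < weight G g.E g := by
  obtain ⟨e, he, A, hA, hlab, ρ, η, R⟩ := h.exists_replaces
  rw [R.E_eq]
  exact R.weight_lt hWF hSL hA hlab (subset_refl _) he

theorem _root_.HGraph.IsIso.weight_eq {g g' : HGraph (T ⊕ ℕ)} {f fe : ℕ → ℕ}
    (iso : g.IsIso g' f fe) : weight G g'.E g' = weight G g.E g :=
  (Finset.sum_nbij fe (fun _ he => iso.bijOn_E.mapsTo he) iso.bijOn_E.injOn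
    iso.bijOn_E.surjOn fun e he => by rw [iso.lab_map e he]).symm

theorem WFGraph.exists_derives_terminal_off (hWF : G.WF rkT) (hSL : G.SL)
    {g : HGraph (T ⊕ ℕ)} (hg : G.WFGraph rkT g) {K : Finset ℕ} (hK : K ⊆ g.E) :
    ∃ k, ReflTransGen G.Derive g k ∧ K ⊆ k.E ∧ (∀ e ∈ K, k.att e = g.att e ∧ k.lab e = g.lab e) ∧
      ∀ e ∈ k.E, e ∉ K → ∃ a, k.lab e = Sum.inl a := by
  induction hn : weight G (g.E \ K) g using Nat.strong_induction_on generalizing g with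
  | _ n ih =>
  by_cases hterm : ∀ e ∈ g.E, e ∉ K → ∃ a, g.lab e = Sum.inl a
  · exact ⟨g, .refl, hK, fun _ _ => ⟨rfl, rfl⟩, hterm⟩
  push Not at hterm
  obtain ⟨e, he, heK, hnt⟩ := hterm
  obtain ⟨B, hB⟩ : ∃ B, g.lab e = Sum.inr B := by
    cases hl : g.lab e with
    | inl a => exact absurd hl (hnt a)
    | inr B => exact ⟨B, rfl⟩
  have hBN := hg.lab_mem e he B hB
  obtain ⟨g', ρ, η, R⟩ := hg.exists_replaces hWF he hB
  have hstep : G.Derive g g' := R.derive he hBN hB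
  have hKg' : ∀ x ∈ K, x ∈ g.E.erase e := fun x hx =>
    Finset.mem_erase.2 ⟨fun h => heK (h ▸ hx), hK hx⟩
  have hset : g'.E \ K = (g.E \ K).erase e ∪ (G.rhs B).E.image η := by
    rw [R.E_eq, Finset.union_sdiff_distrib, Finset.erase_sdiff_comm,
      Finset.sdiff_eq_self_of_disjoint (Finset.disjoint_left.2 fun x hx hxK =>
        R.not_mem_image_edge (hK hxK) hx)]
  have hlt : weight G (g'.E \ K) g' < n := hn ▸ hset ▸
    R.weight_lt hWF hSL hBN hB Finset.sdiff_subset (Finset.mem_sdiff.2 ⟨he, heK⟩)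
  obtain ⟨k, hd, hKk, hkeep, hkt⟩ := ih _ hlt (hg.derive hWF hstep)
    (fun x hx => R.E_eq ▸ Finset.mem_union_left _ (hKg' x hx)) rfl
  refine ⟨k, .head hstep hd, hKk, fun x hx => ?_, hkt⟩
  rw [(hkeep x hx).1, (hkeep x hx).2, R.att_old x (hKg' x hx), R.lab_old x (hKg' x hx)]
  exact ⟨rfl, rfl⟩

theorem WFGraph.exists_derives_terminal (hWF : G.WF rkT) (hSL : G.SL) {g : HGraph (T ⊕ ℕ)}
    (hg : G.WFGraph rkT g) : ∃ h, ReflTransGen G.Derive g h ∧ Terminal h :=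
  let ⟨h, hd, _, _, ht⟩ := hg.exists_derives_terminal_off hWF hSL (Finset.empty_subset _)
  ⟨h, hd, fun e he => ht e he (Finset.notMem_empty e)⟩

theorem eq_of_derives_of_terminal {g h : HGraph (T ⊕ ℕ)} (ht : Terminal g)
    (hd : ReflTransGen G.Derive g h) : h = g := by
  rcases hd.cases_head with rfl | ⟨g₁, hstep, -⟩
  · rfl
  · obtain ⟨e, he, A, -, hlab, -⟩ := hstep.exists_replaces
    obtain ⟨a, ha⟩ := ht e he
    exact absurd (ha.symm.trans hlab) Sum.inl_ne_inr

theorem _root_.HGraph.IsIso.terminal_iff {g g' : HGraph (T ⊕ ℕ)} {f fe : ℕ → ℕ}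
    (iso : g.IsIso g' f fe) : Terminal g ↔ Terminal g' := by
  refine ⟨fun ht e' he' => ?_, fun ht e he => ?_⟩
  · obtain ⟨e, he, rfl⟩ := iso.bijOn_E.surjOn he'
    exact iso.lab_map e he ▸ ht e he
  · exact iso.lab_map e he ▸ ht (fe e) (iso.bijOn_E.mapsTo he)

theorem exists_common_derivative (hWF : G.WF rkT) {g g' g₁ g₂ : HGraph (T ⊕ ℕ)}
    {f fe : ℕ → ℕ} (hg : G.WFGraph rkT g) (hg' : G.WFGraph rkT g') (iso : g.IsIso g' f fe)
    (h₁ : G.Derive g g₁) (h₂ : G.Derive g' g₂) :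
    ∃ k C, G.Derive g' k ∧ g₁.Isomorphic k ∧ ReflTransGen G.Derive k C ∧
      ReflTransGen G.Derive g₂ C := by
  obtain ⟨e₁, he₁, A₁, hA₁, hlab₁, ρ₁, η₁, R₁⟩ := h₁.exists_replaces
  obtain ⟨e₂, he₂, A₂, hA₂, hlab₂, ρ₂, η₂, R₂⟩ := h₂.exists_replaces
  have hfe : fe e₁ ∈ g'.E := iso.bijOn_E.mapsTo he₁
  have hlab : g'.lab (fe e₁) = Sum.inr A₁ := (iso.lab_map e₁ he₁).trans hlab₁
  by_cases heq : fe e₁ = e₂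
  · subst heq
    obtain rfl : A₁ = A₂ := Sum.inr_injective (hlab.symm.trans hlab₂)
    exact ⟨g₂, g₂, h₂, R₁.isomorphic R₂ iso hg.wf (hWF.rhs_wf hA₁) he₁, .refl, .refl⟩
  obtain ⟨k, C, ρ, η, Rk, RC, RkC⟩ := R₂.exists_comm hg'.wf he₂ hfe heq
    (hWF.rhs_wf hA₁).ext_nodup (hg'.rhs_ext_length hWF hfe hlab)
  refine ⟨k, C, Rk.derive hfe hA₁ hlab, R₁.isomorphic Rk iso hg.wf (hWF.rhs_wf hA₁) he₁,
    .single (RkC.derive (Rk.mem_E_of_mem he₂ (Ne.symm heq)) hA₂ ?_),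
    .single (RC.derive (R₂.mem_E_of_mem hfe heq) hA₁ ?_)⟩
  · rw [Rk.lab_old e₂ (Finset.mem_erase.2 ⟨Ne.symm heq, he₂⟩), hlab₂]
  · rw [R₂.lab_old _ (Finset.mem_erase.2 ⟨heq, hfe⟩), hlab]

/-- Newman's lemma up to isomorphism: derivations terminate (`Derive.weight_lt`) and are locally
confluent (`exists_common_derivative`). -/
theorem isomorphic_of_derives_terminal (hWF : G.WF rkT) (hSL : G.SL)
    {g g' h h' : HGraph (T ⊕ ℕ)} (hg : G.WFGraph rkT g) (hg' : G.WFGraph rkT g')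
    (iso : g.Isomorphic g') (hd : ReflTransGen G.Derive g h) (hd' : ReflTransGen G.Derive g' h')
    (ht : Terminal h) (ht' : Terminal h') : h.Isomorphic h' := by
  induction hn : weight G g.E g using Nat.strong_induction_on generalizing g g' h h' with
  | _ n ih =>
  obtain ⟨f, fe, hiso⟩ := isomorphic_iff.1 iso
  by_cases hgt : Terminal g
  · rwa [eq_of_derives_of_terminal hgt hd, eq_of_derives_of_terminal (hiso.terminal_iff.1 hgt) hd']
  obtain ⟨g₁, hstep₁, hd₁⟩ := hd.cases_head.resolve_left fun h => hgt (h ▸ ht)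
  obtain ⟨g₂, hstep₂, hd₂⟩ :=
    hd'.cases_head.resolve_left fun h => hgt (hiso.terminal_iff.2 (h ▸ ht'))
  obtain ⟨k, C, hk, hg₁k, hkC, h₂C⟩ := exists_common_derivative hWF hg hg' hiso hstep₁ hstep₂
  have hg₂ := hg'.derive hWF hstep₂
  obtain ⟨h₃, hC, ht₃⟩ := (hg₂.derives hWF h₂C).exists_derives_terminal hWF hSL
  have hlt₁ : weight G g₁.E g₁ < n := hn ▸ hstep₁.weight_lt hWF hSL
  have hlt₂ : weight G g₂.E g₂ < n := hn ▸ hiso.weight_eq ▸ hstep₂.weight_lt hWF hSL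
  exact (ih _ hlt₁ (hg.derive hWF hstep₁) (hg'.derive hWF hk) hg₁k hd₁ (hkC.trans hC) ht ht₃
    rfl).trans (ih _ hlt₂ hg₂ hg₂ (.refl g₂) (h₂C.trans hC) hd₂ ht₃ ht' rfl)

theorem WFGraph.exists_derives_edge (hWF : G.WF rkT) {B C : ℕ} (hBC : ReflTransGen G.dep B C)
    {g : HGraph (T ⊕ ℕ)} (hg : G.WFGraph rkT g) (hB : ∃ e ∈ g.E, g.lab e = Sum.inr B) :
    ∃ g', ReflTransGen G.Derive g g' ∧ ∃ e ∈ g'.E, g'.lab e = Sum.inr C := by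
  induction hBC using ReflTransGen.head_induction_on generalizing g with
  | refl => exact ⟨g, .refl, hB⟩
  | head hdep _ ih =>
    obtain ⟨e, he, hlab⟩ := hB
    obtain ⟨hB₁, -, x, hx, hxl⟩ := hdep
    obtain ⟨g', ρ, η, R⟩ := hg.exists_replaces hWF he hlab
    have hstep := R.derive he hB₁ hlab
    obtain ⟨g'', hd, hC⟩ := ih (hg.derive hWF hstep)
      ⟨η x, R.mem_E_of_mem_rhs hx, (R.lab_new x hx).trans hxl⟩
    exact ⟨g'', .head hstep hd, hC⟩

theorem _root_.HGraph.Replaces.exists_derives (hWF : G.WF rkT)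
    {k g C g₂ : HGraph (T ⊕ ℕ)} {e₀ : ℕ} {φV φE : ℕ → ℕ} (Rk : k.Replaces e₀ g C φV φE)
    (hk : k.WF (G.rk rkT)) (hg : G.WFGraph rkT g) (hd : ReflTransGen G.Derive g g₂) :
    ∃ C₂ φV' φE', ReflTransGen G.Derive C C₂ ∧ k.Replaces e₀ g₂ C₂ φV' φE' := by
  induction hd with
  | refl => exact ⟨C, φV, φE, .refl, Rk⟩
  | tail hd₁ hstep ih =>
    obtain ⟨C₁, φV₁, φE₁, hC₁, R₁⟩ := ih
    obtain ⟨e, he, A, hA, hlab, ρ, η, R⟩ := hstep.exists_replaces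
    obtain ⟨C₂, _, _, φV₂, φE₂, RC, R₂⟩ :=
      R₁.exists_assoc R hk (hg.derives hWF hd₁).wf (hWF.rhs_wf hA) he
    exact ⟨C₂, φV₂, φE₂, hC₁.tail (RC.derive (R₁.mem_E_of_mem_rhs he) hA
      ((R₁.lab_new e he).trans hlab)), R₂⟩

/-- Derive from `S` a graph whose only nonterminal edge is labelled `A`, and expand that edge
along the derivation of `h₀`. -/
theorem exists_embeds_lang (hWF : G.WF rkT) (hSL : G.SL) {A : ℕ} (hA : A ∈ G.NT)
    {h₀ : HGraph (T ⊕ ℕ)} (hd : ReflTransGen G.Derive (G.rhs A) h₀) (ht : Terminal h₀) :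
    ∃ gh ∈ G.Lang, ∃ Φ ΦE, h₀.Embeds gh Φ ΦE := by
  obtain ⟨B, ⟨eS, heS, hlabS⟩, hBA⟩ := hSL.2 A hA
  obtain ⟨g₁, hd₁, e₁, he₁, hlab₁⟩ :=
    hWF.wfGraph_S.exists_derives_edge hWF hBA ⟨eS, heS, hlabS⟩
  have hg₁ := hWF.wfGraph_S.derives hWF hd₁
  obtain ⟨k, hdk, hek, hkeep, hkt⟩ :=
    hg₁.exists_derives_terminal_off hWF hSL (Finset.singleton_subset_iff.2 he₁)
  have he₁k : e₁ ∈ k.E := hek (Finset.mem_singleton_self _)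
  have hlabk : k.lab e₁ = Sum.inr A := (hkeep e₁ (Finset.mem_singleton_self _)).2.trans hlab₁
  have hk := hg₁.derives hWF hdk
  obtain ⟨K₀, ρ, η, R₀⟩ := hk.exists_replaces hWF he₁k hlabk
  obtain ⟨gh, Φ, ΦE, hd₂, Rgh⟩ := R₀.exists_derives hWF hk.wf (hWF.wfGraph_rhs hA) hd
  refine ⟨gh, ⟨hd₁.trans (hdk.trans (.head (R₀.derive he₁k hA hlabk) hd₂)), fun e he => ?_⟩,
    Φ, ΦE, Rgh.embeds⟩
  rcases Rgh.mem_E_cases he with ⟨he, hne⟩ | ⟨y, hy, rfl⟩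
  · rw [Rgh.lab_old e (Finset.mem_erase.2 ⟨hne, he⟩)]
    exact hkt e he (Finset.notMem_singleton.2 hne)
  · rw [Rgh.lab_new y hy]
    exact ht y hy

/-- Terminal graphs derived from `rhs A` are isomorphic by isomorphisms fixing the external
nodes. -/
theorem exists_internalPath_of_lsRel (hWF : G.WF rkT) (hSL : G.SL) {A : ℕ} (hA : A ∈ G.NT)
    {h₀ : HGraph (T ⊕ ℕ)} (hd₀ : ReflTransGen G.Derive (G.rhs A) h₀) (ht₀ : Terminal h₀)
    {u v : ℕ} (huv : lsRel G A u v) : ∃ p, h₀.InternalPath p u v := by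
  obtain ⟨hu, hv, h₁, hd₁, ht₁, p, hp⟩ := huv
  obtain ⟨f, fe, iso⟩ := isomorphic_iff.1 (isomorphic_of_derives_terminal hWF hSL
    (hWF.wfGraph_rhs hA) (hWF.wfGraph_rhs hA) (.refl _) hd₁ hd₀ ht₁ ht₀)
  have hext : h₀.ext = h₁.ext := by rw [derives_ext_eq hd₀, derives_ext_eq hd₁]
  have hfix : ∀ x ∈ h₁.ext, f x = x :=
    List.map_inj_left.1 ((iso.ext_map.symm.trans hext).trans (List.map_id _).symm)
  rw [← derives_ext_eq hd₁] at hu hv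
  refine ⟨p.map fe, ?_⟩
  rw [← hfix u hu, ← hfix v hv]
  exact hp.map iso.embeds ((hWF.wfGraph_rhs hA).derives hWF hd₁).wf iso.ext_map

end HRGrammar

def IsRootedForest {α : Type*} (R : α → α → Prop) : Prop :=
  (∀ u, ¬ Relation.TransGen R u u) ∧ ∀ v u w, R u v → R w v → u = w

theorem isRootedForest_of_prefix {α β : Type*} {R : α → α → Prop} {S : Set α} (a : α → List β)
    (hS : ∀ u v, R u v → u ∈ S) (hinj : Set.InjOn a S)
    (hR : ∀ u v, R u v → a u <+: a v ∧ a u ≠ a v ∧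
      ∀ z ∈ S, a u <+: a z → a z <+: a v → a z = a u ∨ a z = a v) :
    IsRootedForest R := by
  have hlen : ∀ u v, R u v → (a u).length < (a v).length := fun u v huv =>
    lt_of_le_of_ne (hR u v huv).1.length_le fun h =>
      (hR u v huv).2.1 ((hR u v huv).1.eq_of_length h)
  refine ⟨fun u hu => ?_, fun v u w huv hwv => ?_⟩
  · have key : ∀ x y, Relation.TransGen R x y → (a x).length < (a y).length := by
      intro x y hxy
      induction hxy with
      | single h => exact hlen _ _ h
      | tail _ h ih => exact ih.trans (hlen _ _ h)
    exact lt_irrefl _ (key u u hu)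
  · have below : ∀ u w, R u v → R w v → a u <+: a w → u = w := fun u w huv hwv huw =>
      ((hR u v huv).2.2 w (hS w v hwv) huw (hR w v hwv).1).elim
        (fun h => hinj (hS u v huv) (hS w v hwv) h.symm) fun h => absurd h (hR w v hwv).2.1
    rcases List.prefix_or_prefix_of_prefix (hR u v huv).1 (hR w v hwv).1 with huw | hwu
    · exact below u w huv hwv huw
    · exact (below w u hwv huv hwu).symm

/-- For a tree-generating SL-HR grammar `G`, the
line-structure `ls(A)` of every nonterminal `A` is a rooted forest: it is
acyclic and every node has in-degree at most one. -/
theorem line_structure_is_rooted_forest {T : Type} (rkT : T → ℕ)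
    (G : HRGrammar T) (hWF : G.WF rkT) (hSL : G.SL)
    (hTree : ∀ g ∈ G.Lang, IsTreeGraph (G.rk rkT) g) :
    ∀ A ∈ G.NT,
      (∀ u : ℕ, ¬ Relation.TransGen (lsRel G A) u u) ∧
      (∀ v u w : ℕ, lsRel G A u v → lsRel G A w v → u = w) := by
  intro A hA
  obtain ⟨h₀, hd₀, ht₀⟩ := (hWF.wfGraph_rhs hA).exists_derives_terminal hWF hSL
  have hh₀ := ((hWF.wfGraph_rhs hA).derives hWF hd₀).wf
  obtain ⟨gh, hgh, Φ, ΦE, hΦ⟩ := HRGrammar.exists_embeds_lang hWF hSL hA hd₀ ht₀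
  obtain ⟨t, ht, g₀, htg, iso⟩ := hTree gh hgh
  obtain ⟨f, fe, hiso⟩ := HGraph.isomorphic_iff.1 iso
  have hΨ := hiso.embeds.comp hΦ
  have hS : ∀ u v, lsRel G A u v → u ∈ h₀.ext := fun u v huv => HRGrammar.derives_ext_eq hd₀ ▸ huv.1
  refine isRootedForest_of_prefix (S := {x | x ∈ h₀.ext}) (t.addr ∘ f ∘ Φ) hS
    ((htg.injOn_addr_comp hΨ).mono fun x hx => hh₀.ext_mem hx) fun u v huv => ?_
  obtain ⟨p, hp⟩ := HRGrammar.exists_internalPath_of_lsRel hWF hSL hA hd₀ ht₀ huv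
  exact htg.addr_of_internalPath ht hh₀ hΨ hp
end

section
/- Let h be a hypergraph over Σ ∪ N containing an edge e, and let g be a hypergraph over Σ with rank(g) = rank(e). Let sk(g) be the skeleton graph of g, regarded as a hypergraph whose node set is the set of external nodes of g (with the same external sequence ext_g) and whose edges are simple rank-2 edges (with some fixed label) — one edge from x to y for each pair of external nodes x, y of g such that y is reachable from x in g. Then for all nodes u, v of h (i.e., u, v ∈ V_h), v is reachable from u in h[e/g] if and only if v is reachable from u in h[e/sk(g)]. -/
open scoped Classical

/-- The skeleton graph of `g`, regarded as a hypergraph with a fixed label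
`ℓ`: its nodes are the external nodes of `g` (with the same external
sequence), and it has one simple (rank-2) edge from `x` to `y` for each pair
of external nodes `x, y` such that `y` is reachable from `x` in `g`. -/
noncomputable def skeleton {L : Type} (g : HGraph L) (ℓ : L) : HGraph L where
  V := g.ext.toFinset
  E := ((g.ext.toFinset ×ˢ g.ext.toFinset).filter fun p => g.Reaches p.1 p.2).image
        fun p => Nat.pair p.1 p.2
  att := fun k => [(Nat.unpair k).1, (Nat.unpair k).2]
  lab := fun _ => ℓ
  ext := g.ext

/-!
Every walk in `h[e/g]` between nodes of `h` runs alternately through edges of `h` and through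
the copy of `g`. It can only enter or leave the copy at external nodes of `g`, since the
internal ones are not nodes of `h`; so each maximal stretch inside the copy goes from an
external node `x` to an external node `y` reachable from `x` in `g`, and is replaced by the
edge `(x, y)` of the skeleton. Conversely each skeleton edge expands back into a path of `g`.
-/

namespace Relation

variable {α β : Type*}

def Skeleton (r : β → β → Prop) (X : Set β) : β → β → Prop :=
  fun x y => x ∈ X ∧ y ∈ X ∧ ReflTransGen r x y

variable {O : α → α → Prop} {G : β → β → Prop} {ρ : β → α} {X : Set β}

theorem map_skeleton_congr {ρ' : β → α} (hρ : Set.EqOn ρ ρ' X) :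
    Relation.Map (Skeleton G X) ρ ρ = Relation.Map (Skeleton G X) ρ' ρ' := by
  ext a b
  constructor <;> rintro ⟨x, y, hxy, rfl, rfl⟩
  · exact ⟨x, y, hxy, (hρ hxy.1).symm, (hρ hxy.2.1).symm⟩
  · exact ⟨x, y, hxy, hρ hxy.1, hρ hxy.2.1⟩

theorem ReflTransGen.of_sup_map_skeleton {u v : α}
    (huv : ReflTransGen (O ⊔ Relation.Map (Skeleton G X) ρ ρ) u v) :
    ReflTransGen (O ⊔ Relation.Map G ρ ρ) u v := by
  refine ReflTransGen.lift' id (fun a b hab => ?_) u v huv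
  rcases hab with hab | ⟨x, y, ⟨-, -, hxy⟩, rfl, rfl⟩
  · exact .single (Or.inl hab)
  · exact ReflTransGen.lift ρ (fun x y hxy => Or.inr ⟨x, y, hxy, rfl, rfl⟩) _ _ hxy

theorem ReflTransGen.sup_map_skeleton {A : Set α} {D : Set β}
    (hO : ∀ a b, O a b → a ∈ A ∧ b ∈ A) (hG : ∀ x y, G x y → x ∈ D ∧ y ∈ D)
    (hρ : Set.InjOn ρ D) (hX : ∀ z ∈ D, ρ z ∈ A → z ∈ X)
    {u v : α} (hu : u ∈ A) (hv : v ∈ A) (huv : ReflTransGen (O ⊔ Relation.Map G ρ ρ) u v) :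
    ReflTransGen (O ⊔ Relation.Map (Skeleton G X) ρ ρ) u v := by
  set R := O ⊔ Relation.Map (Skeleton G X) ρ ρ
  -- A walk from `u` that is currently inside the image of `ρ` entered it through some `x ∈ X`.
  suffices H : ∀ b, ReflTransGen (O ⊔ Relation.Map G ρ ρ) u b → (b ∈ A → ReflTransGen R u b) ∧
      ∀ z ∈ D, ρ z = b → ∃ x ∈ X, ReflTransGen R u (ρ x) ∧ ReflTransGen G x z from
    (H v huv).1 hv
  intro b hub
  induction hub with
  | refl => exact ⟨fun _ => .refl, fun z hz hzu => ⟨z, hX z hz (hzu ▸ hu), hzu ▸ .refl, .refl⟩⟩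
  | @tail b c _ hbc ih =>
    rcases hbc with hbc | ⟨x₀, w, hx₀w, rfl, rfl⟩
    · obtain ⟨hb, hc⟩ := hO b c hbc
      have huc : ReflTransGen R u c := (ih.1 hb).tail (Or.inl hbc)
      exact ⟨fun _ => huc, fun z hz hzc => ⟨z, hX z hz (hzc ▸ hc), hzc ▸ huc, .refl⟩⟩
    · obtain ⟨hx₀, hw⟩ := hG x₀ w hx₀w
      obtain ⟨x, hx, hux, hxx₀⟩ := ih.2 x₀ hx₀ rfl
      have hxw : ReflTransGen G x w := hxx₀.tail hx₀w
      refine ⟨fun hwA => hux.tail (Or.inr ⟨x, w, ⟨hx, hX w hw hwA, hxw⟩, rfl, rfl⟩),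
        fun z hz hzw => ⟨x, hx, hux, hρ hz hw hzw ▸ hxw⟩⟩

theorem reflTransGen_sup_map_skeleton_iff {A : Set α} {D : Set β}
    (hO : ∀ a b, O a b → a ∈ A ∧ b ∈ A) (hG : ∀ x y, G x y → x ∈ D ∧ y ∈ D)
    (hρ : Set.InjOn ρ D) (hX : ∀ z ∈ D, ρ z ∈ A → z ∈ X) {u v : α} (hu : u ∈ A) (hv : v ∈ A) :
    ReflTransGen (O ⊔ Relation.Map G ρ ρ) u v ↔
      ReflTransGen (O ⊔ Relation.Map (Skeleton G X) ρ ρ) u v :=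
  ⟨ReflTransGen.sup_map_skeleton hO hG hρ hX hu hv, ReflTransGen.of_sup_map_skeleton⟩

end Relation

namespace HGraph

variable {L : Type}

def Step (g : HGraph L) (a b : ℕ) : Prop :=
  ∃ f ∈ g.E, (g.att f).head? = some a ∧ b ∈ (g.att f).tail

def eraseEdge (g : HGraph L) (e : ℕ) : HGraph L :=
  { g with E := g.E.erase e }

theorem eraseEdge_step_le (g : HGraph L) (e : ℕ) : (g.eraseEdge e).Step ≤ g.Step :=
  fun _ _ ⟨f, hf, hab⟩ => ⟨f, Finset.mem_of_mem_erase hf, hab⟩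

theorem WF.step_mem {rk : L → ℕ} {g : HGraph L} (hg : g.WF rk) {a b : ℕ} (hab : g.Step a b) :
    a ∈ g.V ∧ b ∈ g.V := by
  obtain ⟨f, hf, ha, hb⟩ := hab
  have hattV := (hg.2.1 f hf).1
  exact ⟨hattV a (List.mem_of_mem_head? ha), hattV b (List.mem_of_mem_tail hb)⟩

theorem transGen_step_of_isPath {g : HGraph L} :
    ∀ {p : List ℕ} {s t : ℕ}, g.IsPath p s t → Relation.TransGen g.Step s t
  | [], _, _, hp => absurd rfl hp.1
  | [f], s, t, ⟨_, hmem, ⟨_, hf, hs⟩, _, ⟨_, hf', ht⟩⟩ => by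
    cases Option.some_inj.mp hf
    cases Option.some_inj.mp hf'
    exact .single ⟨f, hmem f (List.mem_singleton_self f), hs, ht⟩
  | f :: f' :: p, s, t, ⟨_, hmem, ⟨_, hf, hs⟩, hchain, ⟨l, hl, ht⟩⟩ => by
    cases Option.some_inj.mp hf
    obtain ⟨⟨w, hw, hfw⟩, hchain'⟩ := List.isChain_cons_cons.mp hchain
    have hrest : g.IsPath (f' :: p) w t :=
      ⟨List.cons_ne_nil _ _, fun f'' hf'' => hmem f'' (List.mem_cons_of_mem _ hf''),
        ⟨f', rfl, hw⟩, hchain', ⟨l, by rwa [List.getLast?_cons_cons] at hl, ht⟩⟩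
    exact .head ⟨f, hmem f List.mem_cons_self, hs, hfw⟩ (transGen_step_of_isPath hrest)

theorem exists_isPath_of_transGen_step {g : HGraph L} {s t : ℕ}
    (hst : Relation.TransGen g.Step s t) : ∃ p, g.IsPath p s t := by
  induction hst with
  | single hst =>
    obtain ⟨f, hf, hs, ht⟩ := hst
    exact ⟨[f], List.cons_ne_nil _ _, fun f' hf' => List.eq_of_mem_singleton hf' ▸ hf,
      ⟨f, rfl, hs⟩, List.isChain_singleton f, ⟨f, rfl, ht⟩⟩
  | tail _ hbc ih =>
    obtain ⟨p, hp, hmem, hhead, hchain, ⟨l, hl, hb⟩⟩ := ih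
    obtain ⟨f, hf, hb', hc⟩ := hbc
    refine ⟨p ++ [f], by simp, fun f' hf' => ?_, ?_, ?_, ⟨f, List.getLast?_concat, hc⟩⟩
    · rcases List.mem_append.mp hf' with hf' | hf'
      · exact hmem f' hf'
      · exact List.eq_of_mem_singleton hf' ▸ hf
    · obtain ⟨f₀, hf₀, hs⟩ := hhead
      exact ⟨f₀, by rw [List.head?_append, hf₀]; rfl, hs⟩
    · refine List.isChain_append.mpr ⟨hchain, List.isChain_singleton f, fun x hx y hy => ?_⟩
      cases Option.some_inj.mp (hl.symm.trans hx)
      cases Option.some_inj.mp hy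
      exact ⟨_, hb', hb⟩

theorem reaches_iff_reflTransGen (g : HGraph L) (s t : ℕ) :
    g.Reaches s t ↔ Relation.ReflTransGen g.Step s t := by
  rw [Relation.reflTransGen_iff_eq_or_transGen, Reaches, eq_comm]
  exact or_congr_right ⟨fun ⟨_, hp⟩ => transGen_step_of_isPath hp, exists_isPath_of_transGen_step⟩

theorem skeleton_step_eq (g : HGraph L) (ℓ : L) :
    (skeleton g ℓ).Step = Relation.Skeleton g.Step {x | x ∈ g.ext} := by
  ext x y
  simp only [Step, skeleton, Finset.mem_image, Finset.mem_filter, Finset.mem_product,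
    List.mem_toFinset, Relation.Skeleton, Set.mem_ofPred_eq, reaches_iff_reflTransGen]
  constructor
  · rintro ⟨_, ⟨⟨x', y'⟩, ⟨⟨hx, hy⟩, hxy⟩, rfl⟩, hx', hy'⟩
    simp only [Nat.unpair_pair, List.head?_cons, Option.some_inj, List.tail_cons,
      List.mem_singleton] at hx' hy'
    subst hx' hy'
    exact ⟨hx, hy, hxy⟩
  · rintro ⟨hx, hy, hxy⟩
    exact ⟨Nat.pair x y, ⟨(x, y), ⟨⟨hx, hy⟩, hxy⟩, rfl⟩, by simp, by simp⟩

theorem _root_.IsReplacement.exists_step_eq {h g h' : HGraph L} {e : ℕ}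
    (hrep : IsReplacement h e g h') :
    ∃ ρ : ℕ → ℕ, Set.InjOn ρ g.V ∧ (∀ v ∈ g.V, v ∉ g.ext → ρ v ∉ h.V) ∧
      g.ext.map ρ = h.att e ∧ h'.Step = (h.eraseEdge e).Step ⊔ Relation.Map g.Step ρ ρ := by
  obtain ⟨ρ, η, hρ, -, hint, hext, -, -, hE, hold, hnew, -⟩ := hrep
  refine ⟨ρ, hρ, hint, hext, ?_⟩
  ext a b
  constructor
  · rintro ⟨f, hf, ha, hb⟩
    rcases Finset.mem_union.mp (hE ▸ hf) with hf | hf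
    · rw [(hold f hf).1] at ha hb
      exact Or.inl ⟨f, hf, ha, hb⟩
    · obtain ⟨f₀, hf₀, rfl⟩ := Finset.mem_image.mp hf
      rw [(hnew f₀ hf₀).1, List.head?_map, Option.map_eq_some_iff] at ha
      rw [(hnew f₀ hf₀).1, ← List.map_tail, List.mem_map] at hb
      obtain ⟨x, hx, rfl⟩ := ha
      obtain ⟨y, hy, rfl⟩ := hb
      exact Or.inr ⟨x, y, ⟨f₀, hf₀, hx, hy⟩, rfl, rfl⟩
  · rintro (⟨f, hf, ha, hb⟩ | ⟨x, y, ⟨f, hf, hx, hy⟩, rfl, rfl⟩)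
    · refine ⟨f, hE ▸ Finset.mem_union_left _ hf, ?_, ?_⟩ <;> rw [(hold f hf).1] <;> assumption
    · refine ⟨η f, hE ▸ Finset.mem_union_right _ (Finset.mem_image_of_mem η hf), ?_, ?_⟩
      · rw [(hnew f hf).1, List.head?_map, hx]; rfl
      · rw [(hnew f hf).1, ← List.map_tail]; exact List.mem_map_of_mem hy

end HGraph

theorem skeleton_replacement_preserves_reachability_general {L : Type} (rk : L → ℕ)
    (h g : HGraph L) (hWFh : h.WF rk) (hWFg : g.WF rk)
    (e : ℕ) (ℓ : L)
    (h₁ h₂ : HGraph L)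
    (hrep₁ : IsReplacement h e g h₁)
    (hrep₂ : IsReplacement h e (skeleton g ℓ) h₂)
    (u v : ℕ) (hu : u ∈ h.V) (hv : v ∈ h.V) :
    h₁.Reaches u v ↔ h₂.Reaches u v := by
  obtain ⟨ρ₁, hinj, hint, hext₁, hstep₁⟩ := hrep₁.exists_step_eq
  obtain ⟨ρ₂, -, -, hext₂, hstep₂⟩ := hrep₂.exists_step_eq
  have hagree : Set.EqOn ρ₂ ρ₁ {x | x ∈ g.ext} :=
    fun x hx => List.map_eq_map_iff.mp (hext₂.trans hext₁.symm) x hx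
  rw [h₁.reaches_iff_reflTransGen, h₂.reaches_iff_reflTransGen, hstep₁, hstep₂,
    HGraph.skeleton_step_eq, Relation.map_skeleton_congr hagree]
  refine Relation.reflTransGen_sup_map_skeleton_iff
    (fun a b hab => hWFh.step_mem (HGraph.eraseEdge_step_le h e a b hab))
    (fun x y hxy => hWFg.step_mem hxy) hinj (fun z hz hzh => ?_) hu hv
  by_contra hzX
  exact hint z hz hzX hzh

/-- Replacing an edge `e` of `h` by a graph `g` or by the
skeleton graph of `g` yields the same reachability relation on the nodes
of `h`. -/
theorem skeleton_replacement_preserves_reachability {L : Type} (rk : L → ℕ)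
    (h g : HGraph L) (hWFh : h.WF rk) (hWFg : g.WF rk)
    (e : ℕ) (he : e ∈ h.E) (hrk : (h.att e).length = g.ext.length) (ℓ : L)
    (h₁ h₂ : HGraph L)
    (hrep₁ : IsReplacement h e g h₁)
    (hrep₂ : IsReplacement h e (skeleton g ℓ) h₂)
    (u v : ℕ) (hu : u ∈ h.V) (hv : v ∈ h.V) :
    h₁.Reaches u v ↔ h₂.Reaches u v :=
  skeleton_replacement_preserves_reachability_general rk h g hWFh hWFg e ℓ h₁ h₂ hrep₁ hrep₂ u v hu
    hv
end
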